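/- arXiv:math/0702597 — 9 statements merged into one kernel-verified Lean document; each statement's English description precedes it below -/
import Mathlib

section
/- For n ≥ 2 and λ > 0, the only equilibrium points of the system ω' = xω, x' = x² - xy + n-1 - λω², y' = xy - nx² - λω² are P₀ = (0,1,n) and P₁ = (0,-1,-n), and the linearization of the system at P₀ has eigenvalues 2, 1, and 1-n. -/
open Real Set

noncomputable def e1 : ℝ × ℝ × ℝ →L[ℝ] ℝ := ContinuousLinearMap.fst ℝ ℝ (ℝ × ℝ)
noncomputable def e2 : ℝ × ℝ × ℝ →L[ℝ] ℝ :=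
  (ContinuousLinearMap.fst ℝ ℝ ℝ).comp (ContinuousLinearMap.snd ℝ ℝ (ℝ × ℝ))
noncomputable def e3 : ℝ × ℝ × ℝ →L[ℝ] ℝ :=
  (ContinuousLinearMap.snd ℝ ℝ ℝ).comp (ContinuousLinearMap.snd ℝ ℝ (ℝ × ℝ))

@[simp] lemma e1_apply (v : ℝ × ℝ × ℝ) : e1 v = v.1 := rfl
@[simp] lemma e2_apply (v : ℝ × ℝ × ℝ) : e2 v = v.2.1 := rfl
@[simp] lemma e3_apply (v : ℝ × ℝ × ℝ) : e3 v = v.2.2 := rfl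

noncomputable def Lmap (n : ℝ) : ℝ × ℝ × ℝ →L[ℝ] ℝ × ℝ × ℝ :=
  e1.prod ((((2:ℝ) - n) • e2 - e3).prod ((-n) • e2 + e3))

@[simp] lemma Lmap_apply (n : ℝ) (v : ℝ × ℝ × ℝ) :
    Lmap n v = (v.1, (2 - n) * v.2.1 - v.2.2, -n * v.2.1 + v.2.2) := rfl

/-- For `n ≥ 2` and `λ > 0`, the only equilibrium points of the system
`ω' = xω`, `x' = x² - xy + n - 1 - λω²`, `y' = xy - nx² - λω²` are `P₀ = (0, 1, n)` and
`P₁ = (0, -1, -n)`, and the linearization (the Fréchet derivative of the vector field)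
at `P₀` has eigenvalues exactly `2`, `1`, and `1 - n`. -/
theorem stmt5
    (n : ℕ) (hn : 2 ≤ n) (lam : ℝ) (hlam : 0 < lam)
    (Φ : ℝ × ℝ × ℝ → ℝ × ℝ × ℝ)
    (hΦ : ∀ p : ℝ × ℝ × ℝ, Φ p =
      (p.2.1 * p.1,
       p.2.1 ^ 2 - p.2.1 * p.2.2 + (n : ℝ) - 1 - lam * p.1 ^ 2,
       p.2.1 * p.2.2 - (n : ℝ) * p.2.1 ^ 2 - lam * p.1 ^ 2)) :
    {p : ℝ × ℝ × ℝ | Φ p = 0}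
        = {((0 : ℝ), (1 : ℝ), (n : ℝ)), ((0 : ℝ), (-1 : ℝ), (-(n : ℝ)))} ∧
    {μ : ℝ | Module.End.HasEigenvalue
        ((fderiv ℝ Φ ((0 : ℝ), (1 : ℝ), (n : ℝ))) : ℝ × ℝ × ℝ →ₗ[ℝ] ℝ × ℝ × ℝ) μ}
      = {2, 1, 1 - (n : ℝ)} := by
  have hΦe : Φ = fun p : ℝ × ℝ × ℝ =>
      ((p.2.1 * p.1,
        p.2.1 ^ 2 - p.2.1 * p.2.2 + (n : ℝ) - 1 - lam * p.1 ^ 2,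
        p.2.1 * p.2.2 - (n : ℝ) * p.2.1 ^ 2 - lam * p.1 ^ 2) : ℝ × ℝ × ℝ) := funext hΦ
  subst hΦe
  have hn' : (2:ℝ) ≤ (n:ℝ) := by exact_mod_cast hn
  constructor
  · ext p
    obtain ⟨w, x, y⟩ := p
    simp only [mem_setOf_eq, Prod.ext_iff, Prod.fst_zero, Prod.snd_zero,
      mem_insert_iff, mem_singleton_iff, Prod.mk.injEq]
    constructor
    · rintro ⟨h1, h2, h3⟩
      have hx : x ≠ 0 := by
        intro hx0
        subst hx0
        have hw2 : lam * w ^ 2 = 0 := by nlinarith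
        nlinarith
      have hw : w = 0 := by
        rcases mul_eq_zero.mp h1 with h | h
        · exact absurd h hx
        · exact h
      subst hw
      have h4 : ((n:ℝ) - 1) * (1 - x ^ 2) = 0 := by ring_nf; nlinarith [h2, h3]
      have hx2 : x ^ 2 = 1 := by
        rcases mul_eq_zero.mp h4 with h | h
        · linarith
        · linarith
      rcases mul_eq_zero.mp (show (x - 1) * (x + 1) = 0 by nlinarith) with h | h
      · left
        have hx1 : x = 1 := by linarith
        subst hx1
        refine ⟨rfl, rfl, by nlinarith⟩
      · right
        have hx1 : x = -1 := by linarith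
        subst hx1
        refine ⟨rfl, rfl, by nlinarith⟩
    · rintro (⟨hw, hx, hy⟩ | ⟨hw, hx, hy⟩) <;> subst hw <;> subst hx <;> subst hy <;>
        refine ⟨by ring, by ring, by ring⟩
  · have hω : HasFDerivAt (fun p : ℝ × ℝ × ℝ => p.1) e1 ((0:ℝ), (1:ℝ), (n:ℝ)) :=
      hasFDerivAt_fst
    have hx : HasFDerivAt (fun p : ℝ × ℝ × ℝ => p.2.1) e2 ((0:ℝ), (1:ℝ), (n:ℝ)) :=
      hasFDerivAt_fst.comp _ hasFDerivAt_snd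
    have hy : HasFDerivAt (fun p : ℝ × ℝ × ℝ => p.2.2) e3 ((0:ℝ), (1:ℝ), (n:ℝ)) :=
      hasFDerivAt_snd.comp _ hasFDerivAt_snd
    have h1 := hx.mul hω
    have h2 := ((((hx.mul hx).sub (hx.mul hy)).add_const ((n:ℝ))).sub_const 1).sub
      ((hω.mul hω).const_mul lam)
    have h3 := ((hx.mul hy).sub ((hx.mul hx).const_mul (n:ℝ))).sub ((hω.mul hω).const_mul lam)
    have hd : HasFDerivAt (fun p : ℝ × ℝ × ℝ =>
        ((p.2.1 * p.1,
          p.2.1 ^ 2 - p.2.1 * p.2.2 + (n : ℝ) - 1 - lam * p.1 ^ 2,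
          p.2.1 * p.2.2 - (n : ℝ) * p.2.1 ^ 2 - lam * p.1 ^ 2) : ℝ × ℝ × ℝ))
        (Lmap (n:ℝ)) ((0:ℝ), (1:ℝ), (n:ℝ)) := by
      have h := HasFDerivAt.prodMk h1 (HasFDerivAt.prodMk h2 h3)
      have hfun : (fun p : ℝ × ℝ × ℝ =>
        ((p.2.1 * p.1,
          p.2.1 ^ 2 - p.2.1 * p.2.2 + (n : ℝ) - 1 - lam * p.1 ^ 2,
          p.2.1 * p.2.2 - (n : ℝ) * p.2.1 ^ 2 - lam * p.1 ^ 2) : ℝ × ℝ × ℝ)) =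
        (fun p : ℝ × ℝ × ℝ =>
        ((p.2.1 * p.1,
          p.2.1 * p.2.1 - p.2.1 * p.2.2 + (n : ℝ) - 1 - lam * (p.1 * p.1),
          p.2.1 * p.2.2 - (n : ℝ) * (p.2.1 * p.2.1) - lam * (p.1 * p.1)) : ℝ × ℝ × ℝ)) := by
        funext p; refine Prod.ext (by ring) (Prod.ext (by ring) (by ring))
      rw [hfun]
      refine HasFDerivAt.congr_fderiv h ?_
      refine ContinuousLinearMap.ext fun v => ?_
      obtain ⟨u, a, b⟩ := v
      simp only [Lmap_apply, ContinuousLinearMap.prod_apply, ContinuousLinearMap.add_apply,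
        ContinuousLinearMap.sub_apply, ContinuousLinearMap.smul_apply, e1_apply, e2_apply,
        e3_apply, smul_eq_mul]
      refine Prod.ext (by norm_num) (Prod.ext (by norm_num; ring) (by norm_num; ring))
    rw [hd.fderiv]
    ext μ
    simp only [mem_setOf_eq, mem_insert_iff, mem_singleton_iff]
    constructor
    · intro h
      obtain ⟨v, hv1, hv0⟩ := h.exists_hasEigenvector
      rw [Module.End.mem_eigenspace_iff] at hv1
      obtain ⟨u, a, b⟩ := v
      simp only [ContinuousLinearMap.coe_coe, Lmap_apply, Prod.smul_mk, smul_eq_mul,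
        Prod.mk.injEq] at hv1
      obtain ⟨E1, E2, E3⟩ := hv1
      by_cases hu : u = 0
      · subst hu
        have ha : a ≠ 0 := by
          intro ha0
          subst ha0
          apply hv0
          have hb : b = 0 := by
            have : (0:ℝ) - b = μ * 0 := by simpa using E2
            have : -b = 0 := by linarith [this]
            linarith
          simp [hb]
        have key : a * ((μ - 2) * (μ - (1 - (n:ℝ)))) = 0 := by
          linear_combination (1 - μ) * E2 + E3
        have key2 : (μ - 2) * (μ - (1 - (n:ℝ))) = 0 :=
          (mul_eq_zero.mp key).resolve_left ha
        rcases mul_eq_zero.mp key2 with h | h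
        · left; linarith
        · right; right; linarith
      · right; left
        have h0 : u * (μ - 1) = 0 := by linear_combination -E1
        have := (mul_eq_zero.mp h0).resolve_left hu
        linarith
    · have veq : ∀ (μ : ℝ) (v : ℝ × ℝ × ℝ), v ≠ 0 →
          (Lmap (n:ℝ) : ℝ × ℝ × ℝ →ₗ[ℝ] ℝ × ℝ × ℝ) v = μ • v →
          Module.End.HasEigenvalue ((Lmap (n:ℝ)) : ℝ × ℝ × ℝ →ₗ[ℝ] ℝ × ℝ × ℝ) μ := fun μ v h0 hv =>
        Module.End.hasEigenvalue_of_hasEigenvector ⟨Module.End.mem_eigenspace_iff.mpr hv, h0⟩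
      rintro (rfl | rfl | rfl)
      · refine veq 2 ((0 : ℝ), (1 : ℝ), (-(n:ℝ))) (by simp [Prod.ext_iff]) ?_
        simp only [ContinuousLinearMap.coe_coe, Lmap_apply, Prod.smul_mk, smul_eq_mul,
          Prod.mk.injEq]
        refine ⟨by norm_num, by ring, by ring⟩
      · refine veq 1 ((1 : ℝ), (0 : ℝ), (0 : ℝ)) (by simp [Prod.ext_iff]) ?_
        simp only [ContinuousLinearMap.coe_coe, Lmap_apply, Prod.smul_mk, smul_eq_mul,
          Prod.mk.injEq]
        refine ⟨by norm_num, by ring, by ring⟩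
      · refine veq (1 - (n:ℝ)) ((0 : ℝ), (1 : ℝ), (1 : ℝ)) (by simp [Prod.ext_iff]) ?_
        simp only [ContinuousLinearMap.coe_coe, Lmap_apply, Prod.smul_mk, smul_eq_mul,
          Prod.mk.injEq]
        refine ⟨by norm_num, by ring, by ring⟩
end

section
/- Along any solution of the system, the x-component satisfies x''' = 2x((2n-1)x - y)x' + 2(x')² + (3x-y)x''. -/
open Real Set

/-- Along any solution `(ω(t), x(t), y(t))` of the system
`ω' = xω`, `x' = x² - xy + n - 1 - λω²`, `y' = xy - nx² - λω²`, the `x`-component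
satisfies `x''' = 2x((2n-1)x - y)x' + 2(x')² + (3x - y)x''`. -/
theorem stmt7
    (n : ℕ) (hn : 2 ≤ n) (lam : ℝ) (hlam : 0 < lam)
    (S T : ℝ) (ω x y : ℝ → ℝ)
    (hsys : ∀ t ∈ Set.Ioo S T,
      HasDerivAt ω (x t * ω t) t ∧
      HasDerivAt x ((x t) ^ 2 - x t * y t + (n : ℝ) - 1 - lam * (ω t) ^ 2) t ∧
      HasDerivAt y (x t * y t - (n : ℝ) * (x t) ^ 2 - lam * (ω t) ^ 2) t) :
    ∀ t ∈ Set.Ioo S T,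
      HasDerivAt (deriv (deriv x))
        (2 * x t * ((2 * (n : ℝ) - 1) * x t - y t) * deriv x t
          + 2 * (deriv x t) ^ 2 + (3 * x t - y t) * deriv (deriv x) t) t := by
  have hopen : IsOpen (Set.Ioo S T) := isOpen_Ioo
  set F : ℝ → ℝ := fun s => (x s) ^ 2 - x s * y s + (n : ℝ) - 1 - lam * (ω s) ^ 2 with hF
  set Y : ℝ → ℝ := fun s => x s * y s - (n : ℝ) * (x s) ^ 2 - lam * (ω s) ^ 2 with hY
  set G : ℝ → ℝ := fun s =>
      2 * x s * F s - (F s * y s + x s * Y s) - lam * (2 * ω s * (x s * ω s)) with hG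
  have hxF : ∀ s ∈ Set.Ioo S T, HasDerivAt x (F s) s := fun s hs => (hsys s hs).2.1
  have hyY : ∀ s ∈ Set.Ioo S T, HasDerivAt y (Y s) s := fun s hs => (hsys s hs).2.2
  have hωd : ∀ s ∈ Set.Ioo S T, HasDerivAt ω (x s * ω s) s := fun s hs => (hsys s hs).1
  have hFd : ∀ s ∈ Set.Ioo S T, HasDerivAt F (G s) s := by
    intro s hs
    have hx := hxF s hs; have hy := hyY s hs; have hω := hωd s hs
    have h1 : HasDerivAt (fun u => (x u) ^ 2) ((2 : ℕ) * (x s) ^ 1 * F s) s := hx.pow 2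
    have h2 : HasDerivAt (fun u => x u * y u) (F s * y s + x s * Y s) s := hx.mul hy
    have h3 : HasDerivAt (fun u => lam * (ω u) ^ 2)
        (lam * ((2 : ℕ) * (ω s) ^ 1 * (x s * ω s))) s := (hω.pow 2).const_mul lam
    have h4 := (((h1.sub h2).add_const ((n : ℝ))).sub_const 1).sub h3
    refine h4.congr_deriv ?_
    simp [hG]
  have hEq1 : Set.EqOn (deriv x) F (Set.Ioo S T) := fun s hs => (hxF s hs).deriv
  have hEq2 : Set.EqOn (deriv (deriv x)) G (Set.Ioo S T) := by
    intro s hs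
    have hmem : Set.Ioo S T ∈ nhds s := hopen.mem_nhds hs
    have hev : deriv x =ᶠ[nhds s] F := Filter.eventuallyEq_of_mem hmem hEq1
    exact ((hFd s hs).congr_of_eventuallyEq hev).deriv
  intro t ht
  have hx := hxF t ht; have hy := hyY t ht; have hω := hωd t ht
  have hFt := hFd t ht
  -- derivative of Y
  have hYd : HasDerivAt Y
      ((F t * y t + x t * Y t) - (n : ℝ) * ((2 : ℕ) * (x t) ^ 1 * F t)
        - lam * ((2 : ℕ) * (ω t) ^ 1 * (x t * ω t))) t :=
    ((hx.mul hy).sub ((hx.pow 2).const_mul (n : ℝ))).sub ((hω.pow 2).const_mul lam)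
  -- derivative of G
  have h1 : HasDerivAt (fun s => 2 * x s * F s)
      ((2 * F t) * F t + 2 * x t * G t) t := (hx.const_mul 2).mul hFt
  have h2 : HasDerivAt (fun s => F s * y s + x s * Y s)
      ((G t * y t + F t * Y t) + (F t * Y t + x t *
        ((F t * y t + x t * Y t) - (n : ℝ) * ((2 : ℕ) * (x t) ^ 1 * F t)
          - lam * ((2 : ℕ) * (ω t) ^ 1 * (x t * ω t))))) t :=
    (hFt.mul hy).add (hx.mul hYd)
  have h3 : HasDerivAt (fun s => lam * (2 * ω s * (x s * ω s)))
      (lam * ((2 * (x t * ω t)) * (x t * ω t)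
        + 2 * ω t * (F t * ω t + x t * (x t * ω t)))) t :=
    (((hω.const_mul 2).mul (hx.mul hω)).const_mul lam)
  have hGd := (h1.sub h2).sub h3
  have hmem : Set.Ioo S T ∈ nhds t := hopen.mem_nhds ht
  have hev : deriv (deriv x) =ᶠ[nhds t] G := Filter.eventuallyEq_of_mem hmem hEq2
  have hfinal := hGd.congr_of_eventuallyEq hev
  refine hfinal.congr_deriv ?_
  rw [hEq1 ht, hEq2 ht]
  simp only [hG, hF, hY]
  push_cast
  ring
end

section
/- If (ω,x,y) is a solution of the system on [t₀,T) with x(t₀) ≥ 1 and x'(t₀) ≥ 0, then x(t) ≥ 1 and x'(t) ≥ 0 for all t ∈ [t₀,T). Similarly the region {x ≤ -1, x' ≤ 0} is forward-invariant. -/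
open Real Set Asymptotics

lemma hasDerivAt_maxsq {f : ℝ → ℝ} {f' t : ℝ} (hf : HasDerivAt f f' t) :
    HasDerivAt (fun s => max (f s) 0 ^ 2) (2 * max (f t) 0 * f') t := by
  rcases lt_trichotomy (f t) 0 with h | h | h
  · have hev : (fun s => max (f s) 0 ^ 2) =ᶠ[nhds t] fun _ => (0:ℝ) := by
      filter_upwards [hf.continuousAt.eventually (gt_mem_nhds h)] with s hs
      simp [max_eq_right hs.le]
    have h0 : (2 : ℝ) * max (f t) 0 * f' = 0 := by simp [max_eq_right h.le]
    rw [h0]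
    exact (hasDerivAt_const t (0:ℝ)).congr_of_eventuallyEq hev
  · have h0 : (2 : ℝ) * max (f t) 0 * f' = 0 := by simp [h]
    rw [h0, hasDerivAt_iff_isLittleO]
    have h1 : (fun s => f s - f t) =O[nhds t] fun s => s - t := hf.isBigO_sub
    have h2 : (fun s => max (f s) 0 ^ 2) =O[nhds t]
        fun s => (f s - f t) * (f s - f t) := by
      apply Asymptotics.IsBigO.of_bound 1
      filter_upwards with s
      rw [h, sub_zero, one_mul, Real.norm_eq_abs, Real.norm_eq_abs]
      rcases le_total (f s) 0 with hs | hs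
      · rw [max_eq_right hs]
        simp only [ne_eq, OfNat.ofNat_ne_zero, not_false_eq_true, zero_pow, abs_zero]
        positivity
      · rw [max_eq_left hs, abs_of_nonneg (by positivity), abs_of_nonneg (by positivity)]
        nlinarith
    have h3 : (fun s : ℝ => (s - t) * (s - t)) =o[nhds t] fun s => s - t := by
      have hlim : (fun s : ℝ => s - t) =o[nhds t] (fun _ => (1:ℝ)) := by
        rw [Asymptotics.isLittleO_one_iff]
        have : Filter.Tendsto (fun s : ℝ => s - t) (nhds t) (nhds (t - t)) :=
          (continuous_id.sub continuous_const).tendsto t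
        simpa using this
      simpa using hlim.mul_isBigO (Asymptotics.isBigO_refl (fun s : ℝ => s - t) (nhds t))
    have := (h2.trans (h1.mul h1)).trans_isLittleO h3
    simpa [h] using this
  · have hev : (fun s => max (f s) 0 ^ 2) =ᶠ[nhds t] fun s => f s ^ 2 := by
      filter_upwards [hf.continuousAt.eventually (lt_mem_nhds h)] with s hs
      simp [max_eq_left hs.le]
    have h1 : HasDerivAt (fun s => f s ^ 2) (2 * max (f t) 0 * f') t := by
      have := hf.fun_pow 2
      simpa [max_eq_left h.le, mul_comm] using this
    exact h1.congr_of_eventuallyEq hev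

lemma invariant_aux (c M : ℝ) (hc : 0 ≤ c) (hM : 0 ≤ M) (a b : ℝ)
    (x u B : ℝ → ℝ)
    (hx : ∀ t ∈ Icc a b, HasDerivAt x (u t) t)
    (hu : ∀ t ∈ Icc a b, HasDerivAt u (c * (x t ^ 3 - x t) + B t * u t) t)
    (hxM : ∀ t ∈ Icc a b, |x t| ≤ M)
    (hBM : ∀ t ∈ Icc a b, |B t| ≤ M)
    (hxa : 1 ≤ x a) (hua : 0 ≤ u a) :
    ∀ t ∈ Icc a b, 1 ≤ x t ∧ 0 ≤ u t := by
  intro t ht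
  have hab : a ≤ b := le_trans ht.1 ht.2
  set K : ℝ := 1 + c * M * (1 + M) + 2 * M with hK
  set p : ℝ → ℝ := fun s => 1 - x s with hp
  set q : ℝ → ℝ := fun s => -u s with hq
  set m : ℝ → ℝ := fun s => max (p s) 0 ^ 2 + max (q s) 0 ^ 2 with hm
  set D : ℝ → ℝ := fun s =>
    2 * max (p s) 0 * q s + 2 * max (q s) 0 * (c * (x s - x s ^ 3) + B s * q s) with hD
  have hm' : ∀ s ∈ Icc a b, HasDerivAt m (D s) s := by
    intro s hs
    have hps : HasDerivAt p (q s) s := by simpa [hp, hq] using (hx s hs).const_sub 1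
    have hqs : HasDerivAt q (c * (x s - x s ^ 3) + B s * q s) s := by
      have := (hu s hs).fun_neg
      refine this.congr_deriv ?_
      simp only [hq]; ring
    exact (hasDerivAt_maxsq hps).add (hasDerivAt_maxsq hqs)
  have hbound : ∀ s ∈ Icc a b, D s ≤ K * m s := by
    intro s hs
    obtain ⟨hX1, hX2⟩ := abs_le.1 (hxM s hs)
    obtain ⟨hB1, hB2⟩ := abs_le.1 (hBM s hs)
    have hQ0 : 0 ≤ max (q s) 0 := le_max_right _ _
    have hQq : q s ≤ max (q s) 0 := le_max_left _ _
    have hQq2 : max (q s) 0 * q s = max (q s) 0 ^ 2 := by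
      rcases le_total (q s) 0 with h | h
      · simp [max_eq_right h]
      · rw [max_eq_left h]; ring
    rcases le_or_gt (p s) 0 with hple | hpgt
    · have hx1 : 1 ≤ x s := by simp only [hp] at hple; linarith
      have hP : max (p s) 0 = 0 := max_eq_right hple
      have hcube : x s ≤ x s ^ 3 := by
        nlinarith [mul_nonneg (mul_nonneg (by linarith : (0:ℝ) ≤ x s)
          (by linarith : (0:ℝ) ≤ x s - 1)) (by linarith : (0:ℝ) ≤ x s + 1)]
      simp only [hD, hm, hP]
      rw [hK]
      have h1 : 0 ≤ c * (max (q s) 0 * (x s ^ 3 - x s)) :=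
        mul_nonneg hc (mul_nonneg hQ0 (by linarith))
      have h2 : 0 ≤ c * M * (1 + M) := mul_nonneg (mul_nonneg hc hM) (by linarith)
      nlinarith [sq_nonneg (max (q s) 0)]
    · have hP : max (p s) 0 = p s := max_eq_left hpgt.le
      have hxlt : x s < 1 := by simp only [hp] at hpgt; linarith
      simp only [hD, hm, hP]
      rw [hK]
      have hxfac : x s - x s ^ 3 = (x s + x s ^ 2) * p s := by simp only [hp]; ring
      have hMx : x s + x s ^ 2 ≤ M + M ^ 2 := by nlinarith
      have h3 : 0 ≤ c * (p s * max (q s) 0) * (M + M ^ 2 - (x s + x s ^ 2)) :=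
        mul_nonneg (mul_nonneg hc (mul_nonneg hpgt.le hQ0)) (by linarith)
      have h4 : 0 ≤ (M - B s) * max (q s) 0 ^ 2 :=
        mul_nonneg (by linarith) (sq_nonneg _)
      have h5 : 0 ≤ p s * (max (q s) 0 - q s) := mul_nonneg hpgt.le (by linarith)
      have h6 : 0 ≤ c * M * (1 + M) * (p s - max (q s) 0) ^ 2 :=
        mul_nonneg (mul_nonneg (mul_nonneg hc hM) (by linarith)) (sq_nonneg _)
      rw [hxfac]
      have h8 : 2 * max (q s) 0 * (B s * q s) = 2 * B s * max (q s) 0 ^ 2 := by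
        rw [← hQq2]; ring
      nlinarith [sq_nonneg (p s - max (q s) 0), mul_nonneg hM (sq_nonneg (p s)),
        mul_nonneg hM (sq_nonneg (max (q s) 0)), h8]
  -- g = m * exp (-(K * s)) is antitone
  set g : ℝ → ℝ := fun s => m s * Real.exp (-(K * s)) with hg
  have hgd : ∀ s ∈ Icc a b, HasDerivAt g
      (D s * Real.exp (-(K * s)) + m s * (Real.exp (-(K * s)) * (-K))) s := by
    intro s hs
    have he : HasDerivAt (fun r => Real.exp (-(K * r))) (Real.exp (-(K * s)) * (-K)) s := by
      have h1 : HasDerivAt (fun r : ℝ => -(K * r)) (-K) s := by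
        simpa using ((hasDerivAt_id s).const_mul K).fun_neg
      exact h1.exp
    exact (hm' s hs).mul he
  have hanti : AntitoneOn g (Icc a b) := by
    apply antitoneOn_of_deriv_nonpos (convex_Icc a b)
    · exact fun s hs => ((hgd s hs).continuousAt).continuousWithinAt
    · intro s hs
      exact ((hgd s (interior_subset hs)).differentiableAt).differentiableWithinAt
    · intro s hs
      have hs' : s ∈ Icc a b := interior_subset hs
      rw [(hgd s hs').deriv]
      have h1 := hbound s hs'
      have h2 := Real.exp_pos (-(K * s))
      nlinarith
  have hma : m a = 0 := by
    have h1 : max (p a) 0 = 0 := max_eq_right (by simp only [hp]; linarith)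
    have h2 : max (q a) 0 = 0 := max_eq_right (by simp only [hq]; linarith)
    simp [hm, h1, h2]
  have hga : g t ≤ g a := hanti (left_mem_Icc.2 hab) ht ht.1
  have hmt : m t ≤ 0 := by
    have h2 := Real.exp_pos (-(K * t))
    have : g a = 0 := by simp [hg, hma]
    rw [this] at hga
    simp only [hg] at hga
    nlinarith
  simp only [hm] at hmt
  have hPt : max (p t) 0 = 0 := by
    have h1 : max (p t) 0 ^ 2 = 0 :=
      le_antisymm (by nlinarith [sq_nonneg (max (q t) 0)]) (sq_nonneg _)
    exact (pow_eq_zero_iff two_ne_zero).1 h1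
  have hQt : max (q t) 0 = 0 := by
    have h1 : max (q t) 0 ^ 2 = 0 :=
      le_antisymm (by nlinarith [sq_nonneg (max (p t) 0)]) (sq_nonneg _)
    exact (pow_eq_zero_iff two_ne_zero).1 h1
  constructor
  · have := le_max_left (p t) 0
    rw [hPt] at this
    simp only [hp] at this; linarith
  · have := le_max_left (q t) 0
    rw [hQt] at this
    simp only [hq] at this; linarith

/-- If `(ω, x, y)` is a solution of the system
`ω' = xω`, `x' = x² - xy + n - 1 - λω²`, `y' = xy - nx² - λω²` on `[t₀, T)` with
`x(t₀) ≥ 1` and `x'(t₀) ≥ 0`, then `x(t) ≥ 1` and `x'(t) ≥ 0` for all `t ∈ [t₀, T)`;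
similarly the region `{x ≤ -1, x' ≤ 0}` is forward-invariant. -/
theorem stmt8
    (n : ℕ) (hn : 2 ≤ n) (lam : ℝ) (hlam : 0 < lam)
    (t₀ T : ℝ) (ht₀ : t₀ < T) (ω x y : ℝ → ℝ)
    (hsys : ∀ t ∈ Set.Ico t₀ T,
      HasDerivAt ω (x t * ω t) t ∧
      HasDerivAt x ((x t) ^ 2 - x t * y t + (n : ℝ) - 1 - lam * (ω t) ^ 2) t ∧
      HasDerivAt y (x t * y t - (n : ℝ) * (x t) ^ 2 - lam * (ω t) ^ 2) t) :
    (1 ≤ x t₀ → 0 ≤ deriv x t₀ →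
      ∀ t ∈ Set.Ico t₀ T, 1 ≤ x t ∧ 0 ≤ deriv x t) ∧
    (x t₀ ≤ -1 → deriv x t₀ ≤ 0 →
      ∀ t ∈ Set.Ico t₀ T, x t ≤ -1 ∧ deriv x t ≤ 0) := by
  have hmem : t₀ ∈ Set.Ico t₀ T := ⟨le_refl _, ht₀⟩
  set u : ℝ → ℝ := fun s => (x s) ^ 2 - x s * y s + (n : ℝ) - 1 - lam * (ω s) ^ 2
    with hu_def
  have hxu : ∀ s ∈ Set.Ico t₀ T, HasDerivAt x (u s) s := fun s hs => (hsys s hs).2.1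
  have hderiv : ∀ s ∈ Set.Ico t₀ T, deriv x s = u s := fun s hs => (hxu s hs).deriv
  have hn2 : (2 : ℝ) ≤ (n : ℝ) := by exact_mod_cast hn
  have hc : (0 : ℝ) ≤ (n : ℝ) - 1 := by linarith
  have huu : ∀ s ∈ Set.Ico t₀ T,
      HasDerivAt u (((n : ℝ) - 1) * ((x s) ^ 3 - x s) + (3 * x s - y s) * u s) s := by
    intro s hs
    obtain ⟨hgω, hgx, hgy⟩ := hsys s hs
    have h1 : HasDerivAt (fun r => (x r) ^ 2) (2 * x s * u s) s := by
      simpa using (hsys s hs).2.1.fun_pow 2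
    have h2 : HasDerivAt (fun r => x r * y r)
        (u s * y s + x s * (x s * y s - (n : ℝ) * (x s) ^ 2 - lam * (ω s) ^ 2)) s :=
      (hsys s hs).2.1.mul hgy
    have h3 : HasDerivAt (fun r => (ω r) ^ 2) (2 * ω s * (x s * ω s)) s := by
      simpa using hgω.fun_pow 2
    have h4 := (((h1.fun_sub h2).add_const ((n : ℝ))).sub_const 1).fun_sub (h3.const_mul lam)
    refine h4.congr_deriv ?_
    simp only [hu_def]
    ring
  constructor
  · intro hx0 hd0 t ht
    obtain ⟨ht1, ht2⟩ := ht
    have hsub : Icc t₀ t ⊆ Set.Ico t₀ T := fun s hs => ⟨hs.1, lt_of_le_of_lt hs.2 ht2⟩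
    have hcx : ContinuousOn x (Icc t₀ t) := fun s hs =>
      ((hxu s (hsub hs)).continuousAt).continuousWithinAt
    have hcB : ContinuousOn (fun s => 3 * x s - y s) (Icc t₀ t) := by
      apply ContinuousOn.sub (continuousOn_const.mul hcx)
      exact fun s hs => ((hsys s (hsub hs)).2.2.continuousAt).continuousWithinAt
    obtain ⟨C1, hC1⟩ := isCompact_Icc.exists_bound_of_continuousOn hcx
    obtain ⟨C2, hC2⟩ := isCompact_Icc.exists_bound_of_continuousOn hcB
    set M : ℝ := max (max C1 C2) 0 with hM_def
    have hM : (0:ℝ) ≤ M := le_max_right _ _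
    have key := invariant_aux ((n : ℝ) - 1) M hc hM t₀ t x u (fun s => 3 * x s - y s)
      (fun s hs => hxu s (hsub hs)) (fun s hs => huu s (hsub hs))
      (fun s hs => (hC1 s hs).trans ((le_max_left C1 C2).trans (le_max_left _ _)))
      (fun s hs => (hC2 s hs).trans ((le_max_right C1 C2).trans (le_max_left _ _)))
      hx0 (by rwa [hderiv t₀ hmem] at hd0) t ⟨ht1, le_refl t⟩
    exact ⟨key.1, by rw [hderiv t ⟨ht1, ht2⟩]; exact key.2⟩
  · intro hx0 hd0 t ht
    obtain ⟨ht1, ht2⟩ := ht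
    have hsub : Icc t₀ t ⊆ Set.Ico t₀ T := fun s hs => ⟨hs.1, lt_of_le_of_lt hs.2 ht2⟩
    have hcx : ContinuousOn x (Icc t₀ t) := fun s hs =>
      ((hxu s (hsub hs)).continuousAt).continuousWithinAt
    have hcB : ContinuousOn (fun s => 3 * x s - y s) (Icc t₀ t) := by
      apply ContinuousOn.sub (continuousOn_const.mul hcx)
      exact fun s hs => ((hsys s (hsub hs)).2.2.continuousAt).continuousWithinAt
    obtain ⟨C1, hC1⟩ := isCompact_Icc.exists_bound_of_continuousOn hcx
    obtain ⟨C2, hC2⟩ := isCompact_Icc.exists_bound_of_continuousOn hcB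
    set M : ℝ := max (max C1 C2) 0 with hM_def
    have hM : (0:ℝ) ≤ M := le_max_right _ _
    have hx' : ∀ s ∈ Icc t₀ t, HasDerivAt (fun r => -x r) ((fun r => -u r) s) s :=
      fun s hs => (hxu s (hsub hs)).neg
    have hu' : ∀ s ∈ Icc t₀ t, HasDerivAt (fun r => -u r)
        (((n : ℝ) - 1) * ((-x s) ^ 3 - (-x s)) + (3 * x s - y s) * (-u s)) s := by
      intro s hs
      have := (huu s (hsub hs)).fun_neg
      refine this.congr_deriv ?_
      ring
    have key := invariant_aux ((n : ℝ) - 1) M hc hM t₀ t (fun r => -x r) (fun r => -u r)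
      (fun s => 3 * x s - y s) hx' hu'
      (fun s hs => by
        show |(-x s)| ≤ M
        rw [abs_neg]
        exact (hC1 s hs).trans ((le_max_left C1 C2).trans (le_max_left _ _)))
      (fun s hs => (hC2 s hs).trans ((le_max_right C1 C2).trans (le_max_left _ _)))
      (by simpa using neg_le_neg hx0)
      (by rw [hderiv t₀ hmem] at hd0; linarith)
      t ⟨ht1, le_refl t⟩
    have k1 : 1 ≤ -x t := key.1
    have k2 : 0 ≤ -u t := key.2
    refine ⟨by linarith, ?_⟩
    rw [hderiv t ⟨ht1, ht2⟩]
    linarith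
end

section
/- Along any solution of the system with ω > 0, the quantity Q = y/ω is strictly decreasing: dQ/dt = -n x²/ω - λω < 0. -/
open Real Set

/-- Along any solution of the system `ω' = xω`,
`x' = x² - xy + n - 1 - λω²`, `y' = xy - nx² - λω²` with `ω > 0`, the quantity
`Q = y/ω` satisfies `dQ/dt = -n x²/ω - λω < 0`; in particular `Q` is strictly
decreasing. -/
theorem stmt10
    (n : ℕ) (hn : 2 ≤ n) (lam : ℝ) (hlam : 0 < lam)
    (S T : ℝ) (ω x y : ℝ → ℝ)
    (hsys : ∀ t ∈ Set.Ioo S T,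
      HasDerivAt ω (x t * ω t) t ∧
      HasDerivAt x ((x t) ^ 2 - x t * y t + (n : ℝ) - 1 - lam * (ω t) ^ 2) t ∧
      HasDerivAt y (x t * y t - (n : ℝ) * (x t) ^ 2 - lam * (ω t) ^ 2) t)
    (hωpos : ∀ t ∈ Set.Ioo S T, 0 < ω t) :
    (∀ t ∈ Set.Ioo S T,
      HasDerivAt (fun s => y s / ω s) (-(n : ℝ) * (x t) ^ 2 / ω t - lam * ω t) t ∧
      -(n : ℝ) * (x t) ^ 2 / ω t - lam * ω t < 0) ∧
    StrictAntiOn (fun s => y s / ω s) (Set.Ioo S T) := by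
  have key : ∀ t ∈ Set.Ioo S T,
      HasDerivAt (fun s => y s / ω s) (-(n : ℝ) * (x t) ^ 2 / ω t - lam * ω t) t := by
    intro t ht
    obtain ⟨hω, hx, hy⟩ := hsys t ht
    have hωt := hωpos t ht
    have h := hy.div hω hωt.ne'
    refine h.congr_deriv ?_
    field_simp
    ring
  have neg : ∀ t ∈ Set.Ioo S T, -(n : ℝ) * (x t) ^ 2 / ω t - lam * ω t < 0 := by
    intro t ht
    have hωt := hωpos t ht
    have h1 : -(n : ℝ) * (x t) ^ 2 / ω t ≤ 0 := by
      apply div_nonpos_of_nonpos_of_nonneg _ hωt.le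
      have : (0:ℝ) ≤ (n : ℝ) * (x t) ^ 2 := by positivity
      linarith
    have h2 : 0 < lam * ω t := by positivity
    linarith
  refine ⟨fun t ht => ⟨key t ht, neg t ht⟩, ?_⟩
  apply strictAntiOn_of_hasDerivWithinAt_neg (convex_Ioo S T)
    (fun t ht => (key t ht).continuousAt.continuousWithinAt)
    (fun t ht => ((key t (by rwa [interior_Ioo] at ht)).hasDerivWithinAt))
    (fun t ht => neg t (by rwa [interior_Ioo] at ht))
end

section
/- If a solution (ω,x,y) with ω > 0 on (S,T) satisfies ∫_{t₀}^{T} ω(σ)dσ = ∞ for some t₀, then y(t)/ω(t) → -∞ as t → T; in particular y(t) < 0 for all t sufficiently close to T. -/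
open Real Set MeasureTheory

/-- If a solution `(ω, x, y)` of the system `ω' = xω`,
`x' = x² - xy + n - 1 - λω²`, `y' = xy - nx² - λω²` with `ω > 0` on `(S,T)` satisfies
`∫_{t₀}^{T} ω(σ) dσ = ∞` for some `t₀ ∈ (S,T)` (i.e. `ω` is not integrable on `(t₀,T)`),
then `y(t)/ω(t) → -∞` as `t → T⁻`; in particular `y(t) < 0` for all `t` sufficiently
close to `T`. -/
theorem stmt11
    (n : ℕ) (hn : 2 ≤ n) (lam : ℝ) (hlam : 0 < lam)
    (S T : ℝ) (ω x y : ℝ → ℝ)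
    (hsys : ∀ t ∈ Set.Ioo S T,
      HasDerivAt ω (x t * ω t) t ∧
      HasDerivAt x ((x t) ^ 2 - x t * y t + (n : ℝ) - 1 - lam * (ω t) ^ 2) t ∧
      HasDerivAt y (x t * y t - (n : ℝ) * (x t) ^ 2 - lam * (ω t) ^ 2) t)
    (hωpos : ∀ t ∈ Set.Ioo S T, 0 < ω t)
    (t₀ : ℝ) (ht₀ : t₀ ∈ Set.Ioo S T)
    (hdiv : ¬ IntegrableOn ω (Set.Ioo t₀ T) volume) :
    Filter.Tendsto (fun t => y t / ω t) (nhdsWithin T (Set.Ioo S T)) Filter.atBot ∧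
    ∃ t₁ ∈ Set.Ioo S T, ∀ t ∈ Set.Ioo t₁ T, y t < 0 := by
  obtain ⟨hSt₀, ht₀T⟩ := ht₀
  have hωcont : ContinuousOn ω (Set.Ioo S T) := fun t ht =>
    ((hsys t ht).1.continuousAt).continuousWithinAt
  set g : ℝ → ℝ := fun t => y t / ω t with hgdef
  set F : ℝ → ℝ := fun t => ∫ s in t₀..t, ω s with hFdef
  -- interval integrability between points of Ioo S T
  have hii : ∀ t ∈ Set.Ioo S T, ∀ t' ∈ Set.Ioo S T, IntervalIntegrable ω volume t t' := by
    intro t ht t' ht'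
    exact (hωcont.mono (Set.ordConnected_Ioo.uIcc_subset ht ht')).intervalIntegrable
  have ht₀mem : t₀ ∈ Set.Ioo S T := ⟨hSt₀, ht₀T⟩
  -- derivative of F
  have hFder : ∀ t ∈ Set.Ioo S T, HasDerivAt F (ω t) t := by
    intro t ht
    exact intervalIntegral.integral_hasDerivAt_right (hii t₀ ht₀mem t ht)
      (hωcont.stronglyMeasurableAtFilter isOpen_Ioo t ht) ((hsys t ht).1.continuousAt)
  -- derivative of g + lam * F is nonpositive
  set h : ℝ → ℝ := fun t => g t + lam * F t with hhdef
  have hhder : ∀ t ∈ Set.Ioo S T, HasDerivAt h (-(n : ℝ) * (x t) ^ 2 / ω t) t := by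
    intro t ht
    have hω := hωpos t ht
    obtain ⟨hdω, hdx, hdy⟩ := hsys t ht
    have hgd : HasDerivAt g
        (((x t * y t - (n : ℝ) * (x t) ^ 2 - lam * (ω t) ^ 2) * ω t -
          y t * (x t * ω t)) / (ω t) ^ 2) t := hdy.div hdω hω.ne'
    have : HasDerivAt h
        (((x t * y t - (n : ℝ) * (x t) ^ 2 - lam * (ω t) ^ 2) * ω t -
          y t * (x t * ω t)) / (ω t) ^ 2 + lam * ω t) t :=
      hgd.add ((hFder t ht).const_mul lam)
    convert this using 1
    field_simp
    ring
  have hhder_nonpos : ∀ t ∈ Set.Ioo S T, -(n : ℝ) * (x t) ^ 2 / ω t ≤ 0 := by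
    intro t ht
    apply div_nonpos_of_nonpos_of_nonneg _ (hωpos t ht).le
    have : (0 : ℝ) ≤ (n : ℝ) * (x t) ^ 2 := by positivity
    linarith
  -- Ico t₀ T ⊆ Ioo S T
  have hIco : Set.Ico t₀ T ⊆ Set.Ioo S T := fun s hs => ⟨lt_of_lt_of_le hSt₀ hs.1, hs.2⟩
  -- h is antitone on Ico t₀ T
  have hanti : AntitoneOn h (Set.Ico t₀ T) := by
    apply antitoneOn_of_hasDerivWithinAt_nonpos (convex_Ico t₀ T)
      (f' := fun t => -(n : ℝ) * (x t) ^ 2 / ω t)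
    · intro s hs
      exact ((hhder s (hIco hs)).continuousAt).continuousWithinAt
    · intro s hs
      rw [interior_Ico] at hs
      exact ((hhder s (hIco (Set.Ioo_subset_Ico_self hs))).hasDerivWithinAt)
    · intro s hs
      rw [interior_Ico] at hs
      exact hhder_nonpos s (hIco (Set.Ioo_subset_Ico_self hs))
  have hF0 : F t₀ = 0 := intervalIntegral.integral_same
  -- key bound: g t ≤ g t₀ - lam * F t on Ico t₀ T
  have hkey : ∀ t ∈ Set.Ico t₀ T, g t ≤ g t₀ - lam * F t := by
    intro t ht
    have := hanti (Set.left_mem_Ico.2 (lt_of_le_of_lt ht.1 ht.2)) ht ht.1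
    simp only [hhdef, hF0, mul_zero, add_zero] at this
    linarith
  -- F is monotone on Ico t₀ T
  have hFmono : ∀ u ∈ Set.Ico t₀ T, ∀ t ∈ Set.Ico t₀ T, u ≤ t → F u ≤ F t := by
    intro u hu t ht hut
    have h1 : F u + ∫ s in u..t, ω s = F t :=
      intervalIntegral.integral_add_adjacent_intervals (hii t₀ ht₀mem u (hIco hu))
        (hii u (hIco hu) t (hIco ht))
    have h2 : (0 : ℝ) ≤ ∫ s in u..t, ω s := by
      apply intervalIntegral.integral_nonneg hut
      intro s hs
      exact (hωpos s ⟨lt_of_lt_of_le hSt₀ (le_trans hu.1 hs.1), lt_of_le_of_lt hs.2 ht.2⟩).le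
    linarith
  -- F is unbounded on Ico t₀ T
  have hFunbdd : ∀ C : ℝ, ∃ u ∈ Set.Ico t₀ T, C < F u := by
    by_contra hcon
    push_neg at hcon
    obtain ⟨C, hC⟩ := hcon
    apply hdiv
    have hsub : Set.Ioo t₀ T ⊆ Set.Ioc t₀ T := Set.Ioo_subset_Ioc_self
    refine MeasureTheory.IntegrableOn.mono_set ?_ hsub
    set b : ℕ → ℝ := fun k => T - (T - t₀) / (k + 1) with hbdef
    have hTt₀ : 0 < T - t₀ := by linarith
    have hbmem : ∀ k, b k ∈ Set.Ico t₀ T := by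
      intro k
      have hk1 : (1 : ℝ) ≤ (k : ℝ) + 1 := by have := Nat.cast_nonneg (α := ℝ) k; linarith
      constructor
      · have : (T - t₀) / ((k : ℝ) + 1) ≤ T - t₀ := by
          rw [div_le_iff₀ (by positivity)]
          nlinarith
        simp only [hbdef]; linarith
      · have : 0 < (T - t₀) / ((k : ℝ) + 1) := by positivity
        simp only [hbdef]; linarith
    have hbtend : Filter.Tendsto b Filter.atTop (nhds T) := by
      have h1 : Filter.Tendsto (fun k : ℕ => (T - t₀) * (1 / ((k : ℝ) + 1)))
          Filter.atTop (nhds ((T - t₀) * 0)) :=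
        Filter.Tendsto.const_mul _ tendsto_one_div_add_atTop_nhds_zero_nat
      have h2 : Filter.Tendsto (fun k : ℕ => T - (T - t₀) * (1 / ((k : ℝ) + 1)))
          Filter.atTop (nhds (T - (T - t₀) * 0)) := tendsto_const_nhds.sub h1
      simpa [hbdef, mul_one_div, div_eq_mul_inv] using h2
    apply MeasureTheory.integrableOn_Ioc_of_intervalIntegral_norm_bounded_right
      (I := C) (b := b) (fun k => ((hii t₀ ht₀mem (b k) (hIco (hbmem k))).1)) hbtend
    apply Filter.Eventually.of_forall
    intro k
    have heq : (∫ s in Set.Ioc t₀ (b k), ‖ω s‖) = ∫ s in Set.Ioc t₀ (b k), ω s := by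
      apply MeasureTheory.setIntegral_congr_fun measurableSet_Ioc
      intro s hs
      exact Real.norm_of_nonneg (hωpos s ⟨lt_trans hSt₀ hs.1,
        lt_of_le_of_lt hs.2 (hbmem k).2⟩).le
    have hFeq : F (b k) = ∫ s in Set.Ioc t₀ (b k), ω s :=
      intervalIntegral.integral_of_le (hbmem k).1
    rw [heq, ← hFeq]
    exact hC _ (hbmem k)
  -- the key eventual bound
  have hmain : ∀ C : ℝ, ∃ t₁ ∈ Set.Ico t₀ T, ∀ t ∈ Set.Ioo t₁ T, g t ≤ C := by
    intro C
    obtain ⟨u, hu, hCu⟩ := hFunbdd ((g t₀ - C) / lam)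
    refine ⟨u, hu, fun t ht => ?_⟩
    have htmem : t ∈ Set.Ico t₀ T := ⟨le_trans hu.1 ht.1.le, ht.2⟩
    have hF := hFmono u hu t htmem ht.1.le
    have := hkey t htmem
    have hlt : (g t₀ - C) / lam < F t := lt_of_lt_of_le hCu hF
    rw [div_lt_iff₀ hlam] at hlt
    nlinarith
  constructor
  · rw [Filter.tendsto_atBot]
    intro C
    obtain ⟨t₁, ht₁, hbound⟩ := hmain C
    rw [Filter.eventually_iff]
    apply mem_nhdsWithin.2
    refine ⟨Set.Ioi t₁, isOpen_Ioi, ht₁.2, fun t ht => ?_⟩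
    exact hbound t ⟨ht.1, ht.2.2⟩
  · obtain ⟨t₁, ht₁, hbound⟩ := hmain (-1)
    refine ⟨t₁, hIco ht₁, fun t ht => ?_⟩
    have htmem : t ∈ Set.Ioo S T := ⟨lt_trans (hIco ht₁).1 ht.1, ht.2⟩
    have hg := hbound t ht
    have hω := hωpos t htmem
    have : y t / ω t < 0 := lt_of_le_of_lt hg (by norm_num)
    rw [div_lt_iff₀ hω] at this
    simpa using this
end

section
/- Suppose x : [t₀,T) → ℝ is C² with x(t₀) > 1, x'(t₀) > 0, and x'' ≥ (n-1)x(x²-1) + 3x x' whenever x > 1, x' > 0 (so that x'' > (3/2)(x²)'). If [t₀,T) is the maximal interval of existence of the underlying ODE system whose solutions have derivatives bounded in terms of x, then T < ∞ and lim_{t→T} x(t) = ∞, with x(t) ≤ 4/(5(T-t)) for t near T. -/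
open Real Set

namespace Stmt13Aux

variable {t₀ b : ℝ} {x : ℝ → ℝ}

lemma dAt1 (hx : ContDiffOn ℝ 2 x (Ico t₀ b)) {t : ℝ} (ht : t ∈ Ioo t₀ b) :
    DifferentiableAt ℝ x t :=
  ((hx.mono Ioo_subset_Ico_self).differentiableOn two_ne_zero).differentiableAt
    (isOpen_Ioo.mem_nhds ht)

lemma contDeriv (hx : ContDiffOn ℝ 2 x (Ico t₀ b)) :
    ContDiffOn ℝ 1 (deriv x) (Ioo t₀ b) :=
  (hx.mono Ioo_subset_Ico_self).deriv_of_isOpen isOpen_Ioo (by norm_num)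

lemma dAt2 (hx : ContDiffOn ℝ 2 x (Ico t₀ b)) {t : ℝ} (ht : t ∈ Ioo t₀ b) :
    DifferentiableAt ℝ (deriv x) t :=
  ((contDeriv hx).differentiableOn one_ne_zero).differentiableAt (isOpen_Ioo.mem_nhds ht)

lemma contOnDeriv (hx : ContDiffOn ℝ 2 x (Ico t₀ b)) :
    ContinuousOn (deriv x) (Ioo t₀ b) :=
  (contDeriv hx).continuousOn

lemma pos (hb : t₀ < b) (hx : ContDiffOn ℝ 2 x (Ico t₀ b))
    (hx1 : 1 < x t₀) (hx'0 : 0 < deriv x t₀)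
    (hkey : ∀ t ∈ Ioo t₀ b, 1 < x t → 0 < deriv x t →
      3 * x t * deriv x t ≤ deriv (deriv x) t) :
    ∀ t ∈ Ioo t₀ b, 1 < x t ∧ 0 < deriv x t := by
  set y := derivWithin x (Ico t₀ b) with hy
  have hu : UniqueDiffOn ℝ (Ico t₀ b) := uniqueDiffOn_Ico t₀ b
  have hyc : ContinuousOn y (Ico t₀ b) := hx.continuousOn_derivWithin hu (by norm_num)
  have hy0 : y t₀ = deriv x t₀ := by
    have hdx0 : DifferentiableAt ℝ x t₀ := by
      by_contra h
      rw [deriv_zero_of_not_differentiableAt h] at hx'0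
      exact lt_irrefl 0 hx'0
    exact hdx0.derivWithin (hu t₀ ⟨le_rfl, hb⟩)
  have hyeq : ∀ t ∈ Ioo t₀ b, y t = deriv x t := by
    intro t ht
    exact derivWithin_of_mem_nhds
      (mem_nhds_iff.2 ⟨Ioo t₀ b, Ioo_subset_Ico_self, isOpen_Ioo, ht⟩)
  have claim : ∀ t ∈ Ico t₀ b, 1 < x t ∧ 0 < y t := by
    by_contra hcon
    push_neg at hcon
    obtain ⟨b₀, hb₀mem, hbad⟩ := hcon
    have hbad' : x b₀ ≤ 1 ∨ y b₀ ≤ 0 := by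
      by_cases h1 : 1 < x b₀
      · exact Or.inr (hbad h1)
      · exact Or.inl (not_lt.1 h1)
    set B' : Set ℝ := (Icc t₀ b₀ ∩ x ⁻¹' Iic 1) ∪ (Icc t₀ b₀ ∩ y ⁻¹' Iic 0) with hB'
    have hsub : Icc t₀ b₀ ⊆ Ico t₀ b := Icc_subset_Ico_right hb₀mem.2
    have hclosed : IsClosed B' := by
      refine IsClosed.union ?_ ?_
      · exact (hx.continuousOn.mono hsub).preimage_isClosed_of_isClosed isClosed_Icc isClosed_Iic
      · exact (hyc.mono hsub).preimage_isClosed_of_isClosed isClosed_Icc isClosed_Iic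
    have hne : B'.Nonempty := by
      refine ⟨b₀, ?_⟩
      rcases hbad' with h | h
      · exact Or.inl ⟨⟨hb₀mem.1, le_rfl⟩, h⟩
      · exact Or.inr ⟨⟨hb₀mem.1, le_rfl⟩, h⟩
    have hbdd : BddBelow B' := ⟨t₀, by
      rintro t (⟨⟨h, _⟩, _⟩ | ⟨⟨h, _⟩, _⟩) <;> exact h⟩
    set τ := sInf B' with hτdef
    have hτ : τ ∈ B' := hclosed.csInf_mem hne hbdd
    have hτIcc : τ ∈ Icc t₀ b₀ := by
      rcases hτ with ⟨h, _⟩ | ⟨h, _⟩ <;> exact h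
    have hτlt : τ < b := lt_of_le_of_lt hτIcc.2 hb₀mem.2
    have hgood : ∀ t, t₀ ≤ t → t < τ → 1 < x t ∧ 0 < y t := by
      intro t h1 h2
      by_contra h
      have h' : x t ≤ 1 ∨ y t ≤ 0 := by
        by_cases hxt : 1 < x t
        · exact Or.inr (not_lt.1 fun hyt => h ⟨hxt, hyt⟩)
        · exact Or.inl (not_lt.1 hxt)
      have htB : t ∈ B' := by
        have htIcc : t ∈ Icc t₀ b₀ := ⟨h1, le_of_lt (lt_of_lt_of_le h2 hτIcc.2)⟩
        rcases h' with h' | h'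
        · exact Or.inl ⟨htIcc, h'⟩
        · exact Or.inr ⟨htIcc, h'⟩
      exact absurd (csInf_le hbdd htB) (not_le.2 h2)
    have hτne : τ ≠ t₀ := by
      intro heq
      rcases hτ with ⟨_, h⟩ | ⟨_, h⟩
      · rw [heq] at h; simp only [mem_preimage, mem_Iic] at h; linarith
      · rw [heq] at h; simp only [mem_preimage, mem_Iic] at h; rw [hy0] at h; linarith
    have hτ0 : t₀ < τ := lt_of_le_of_ne hτIcc.1 (Ne.symm hτne)
    have hgood' : ∀ t ∈ Ioo t₀ τ, 1 < x t ∧ 0 < deriv x t := by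
      intro t ht
      have h := hgood t ht.1.le ht.2
      have hIoo : t ∈ Ioo t₀ b := ⟨ht.1, ht.2.trans hτlt⟩
      exact ⟨h.1, by rw [← hyeq t hIoo]; exact h.2⟩
    -- x τ > 1
    have hmono : StrictMonoOn x (Icc t₀ τ) := by
      apply strictMonoOn_of_deriv_pos (convex_Icc _ _)
        (hx.continuousOn.mono (Icc_subset_Ico_right hτlt))
      rw [interior_Icc]
      exact fun t ht => (hgood' t ht).2
    have hxτ : 1 < x τ :=
      lt_trans hx1 (hmono ⟨le_rfl, hτ0.le⟩ ⟨hτ0.le, le_rfl⟩ hτ0)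
    -- deriv x τ > 0
    set m := (t₀ + τ) / 2 with hm
    have hmIoo : m ∈ Ioo t₀ τ := ⟨by simp only [hm]; linarith, by simp only [hm]; linarith⟩
    have hIccsub : Icc m τ ⊆ Ioo t₀ b :=
      fun t ht => ⟨lt_of_lt_of_le hmIoo.1 ht.1, lt_of_le_of_lt ht.2 hτlt⟩
    have hdd : ∀ t ∈ Ioo m τ, 0 < deriv (deriv x) t := by
      intro t ht
      have htIoo : t ∈ Ioo t₀ τ := ⟨hmIoo.1.trans ht.1, ht.2⟩
      have h1 := hgood' t htIoo
      have hk := hkey t ⟨htIoo.1, htIoo.2.trans hτlt⟩ h1.1 h1.2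
      nlinarith [h1.1, h1.2]
    have hmono2 : StrictMonoOn (deriv x) (Icc m τ) := by
      apply strictMonoOn_of_deriv_pos (convex_Icc _ _) ((contOnDeriv hx).mono hIccsub)
      rw [interior_Icc]
      exact hdd
    have hyτ : 0 < deriv x τ :=
      lt_trans (hgood' m hmIoo).2 (hmono2 ⟨le_rfl, hmIoo.2.le⟩ ⟨hmIoo.2.le, le_rfl⟩ hmIoo.2)
    have hyτ' : 0 < y τ := by rw [hyeq τ ⟨hτ0, hτlt⟩]; exact hyτ
    rcases hτ with ⟨_, h⟩ | ⟨_, h⟩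
    · simp only [mem_preimage, mem_Iic] at h; linarith
    · simp only [mem_preimage, mem_Iic] at h; linarith
  intro t ht
  have h := claim t (Ioo_subset_Ico_self ht)
  exact ⟨h.1, by rw [← hyeq t ht]; exact h.2⟩


-- (b): x' (t) ≥ (3/2) x(t)² + c  on [t₁, b)
lemma grow_sq (hx : ContDiffOn ℝ 2 x (Ico t₀ b))
    (hpos : ∀ t ∈ Ioo t₀ b, 1 < x t ∧ 0 < deriv x t)
    (hkey : ∀ t ∈ Ioo t₀ b, 1 < x t → 0 < deriv x t →
      3 * x t * deriv x t ≤ deriv (deriv x) t)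
    {t₁ : ℝ} (ht₁ : t₁ ∈ Ioo t₀ b) :
    ∀ t ∈ Ico t₁ b,
      3 / 2 * x t ^ 2 + (deriv x t₁ - 3 / 2 * x t₁ ^ 2) ≤ deriv x t := by
  intro t ht
  rcases eq_or_lt_of_le ht.1 with rfl | hlt
  · linarith
  set g : ℝ → ℝ := fun u => deriv x u - 3 / 2 * x u ^ 2 with hg
  have hIcc : Icc t₁ t ⊆ Ioo t₀ b :=
    fun u hu => ⟨lt_of_lt_of_le ht₁.1 hu.1, lt_of_le_of_lt hu.2 ht.2⟩
  have hgC : ContinuousOn g (Icc t₁ t) := by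
    apply ContinuousOn.sub ((contOnDeriv hx).mono hIcc)
    exact (continuousOn_const.mul (((hx.continuousOn.mono
      (hIcc.trans Ioo_subset_Ico_self)).pow 2)))
  have hgd : ∀ u ∈ Ioo t₁ t,
      HasDerivAt g (deriv (deriv x) u - 3 / 2 * (2 * x u ^ 1 * deriv x u)) u := by
    intro u hu
    have huI : u ∈ Ioo t₀ b := hIcc (Ioo_subset_Icc_self hu)
    exact ((dAt2 hx huI).hasDerivAt).sub
      ((((dAt1 hx huI).hasDerivAt).pow 2).const_mul (3 / 2))
  have hmono : MonotoneOn g (Icc t₁ t) := by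
    apply monotoneOn_of_deriv_nonneg (convex_Icc _ _) hgC
    · rw [interior_Icc]
      exact fun u hu => ((hgd u hu).differentiableAt).differentiableWithinAt
    · rw [interior_Icc]
      intro u hu
      rw [(hgd u hu).deriv]
      have huI : u ∈ Ioo t₀ b := hIcc (Ioo_subset_Icc_self hu)
      have hp := hpos u huI
      have hk := hkey u huI hp.1 hp.2
      simp only [pow_one]
      linarith
  have := hmono ⟨le_rfl, ht.1⟩ ⟨ht.1, le_rfl⟩ ht.1
  simp only [hg] at this
  linarith

-- x' is monotone (≥ value at t₁)
lemma deriv_ge (hx : ContDiffOn ℝ 2 x (Ico t₀ b))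
    (hpos : ∀ t ∈ Ioo t₀ b, 1 < x t ∧ 0 < deriv x t)
    (hkey : ∀ t ∈ Ioo t₀ b, 1 < x t → 0 < deriv x t →
      3 * x t * deriv x t ≤ deriv (deriv x) t)
    {t₁ : ℝ} (ht₁ : t₁ ∈ Ioo t₀ b) :
    ∀ t ∈ Ico t₁ b, deriv x t₁ ≤ deriv x t := by
  intro t ht
  rcases eq_or_lt_of_le ht.1 with rfl | hlt
  · exact le_rfl
  have hIcc : Icc t₁ t ⊆ Ioo t₀ b :=
    fun u hu => ⟨lt_of_lt_of_le ht₁.1 hu.1, lt_of_le_of_lt hu.2 ht.2⟩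
  have hmono : MonotoneOn (deriv x) (Icc t₁ t) := by
    apply monotoneOn_of_deriv_nonneg (convex_Icc _ _) ((contOnDeriv hx).mono hIcc)
    · rw [interior_Icc]
      exact fun u hu => (dAt2 hx (hIcc (Ioo_subset_Icc_self hu))).differentiableWithinAt
    · rw [interior_Icc]
      intro u hu
      have huI : u ∈ Ioo t₀ b := hIcc (Ioo_subset_Icc_self hu)
      have hp := hpos u huI
      have hk := hkey u huI hp.1 hp.2
      nlinarith [hp.1, hp.2]
  exact hmono ⟨le_rfl, ht.1⟩ ⟨ht.1, le_rfl⟩ ht.1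

-- (a): linear growth
lemma grow_lin (hx : ContDiffOn ℝ 2 x (Ico t₀ b))
    (hpos : ∀ t ∈ Ioo t₀ b, 1 < x t ∧ 0 < deriv x t)
    (hkey : ∀ t ∈ Ioo t₀ b, 1 < x t → 0 < deriv x t →
      3 * x t * deriv x t ≤ deriv (deriv x) t)
    {t₁ : ℝ} (ht₁ : t₁ ∈ Ioo t₀ b) :
    ∀ t ∈ Ico t₁ b, x t₁ + deriv x t₁ * (t - t₁) ≤ x t := by
  intro t ht
  rcases eq_or_lt_of_le ht.1 with rfl | hlt
  · simp
  set f : ℝ → ℝ := fun u => x u - deriv x t₁ * u with hf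
  have hIcc : Icc t₁ t ⊆ Ioo t₀ b :=
    fun u hu => ⟨lt_of_lt_of_le ht₁.1 hu.1, lt_of_le_of_lt hu.2 ht.2⟩
  have hfd : ∀ u ∈ Ioo t₁ t, HasDerivAt f (deriv x u - deriv x t₁ * 1) u := by
    intro u hu
    exact ((dAt1 hx (hIcc (Ioo_subset_Icc_self hu))).hasDerivAt).sub
      ((hasDerivAt_id u).const_mul (deriv x t₁))
  have hfC : ContinuousOn f (Icc t₁ t) :=
    (hx.continuousOn.mono (hIcc.trans Ioo_subset_Ico_self)).sub
      (continuousOn_const.mul continuousOn_id)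
  have hmono : MonotoneOn f (Icc t₁ t) := by
    apply monotoneOn_of_deriv_nonneg (convex_Icc _ _) hfC
    · rw [interior_Icc]
      exact fun u hu => ((hfd u hu).differentiableAt).differentiableWithinAt
    · rw [interior_Icc]
      intro u hu
      rw [(hfd u hu).deriv]
      have hge := deriv_ge hx hpos hkey ht₁ u
        ⟨hu.1.le, (hIcc (Ioo_subset_Icc_self hu)).2⟩
      linarith
  have := hmono ⟨le_rfl, ht.1⟩ ⟨ht.1, le_rfl⟩ ht.1
  simp only [hf] at this
  linarith

-- blow-up estimate
lemma blow (hx : ContDiffOn ℝ 2 x (Ico t₀ b))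
    (hpos : ∀ t ∈ Ioo t₀ b, 1 < x t ∧ 0 < deriv x t)
    {t₂ : ℝ} (ht₂ : t₂ ∈ Ioo t₀ b)
    (h54 : ∀ w ∈ Ico t₂ b, 5 / 4 * x w ^ 2 ≤ deriv x w) :
    ∀ t ∈ Ico t₂ b, ∀ u ∈ Ico t b, 5 / 4 * (u - t) ≤ 1 / x t - 1 / x u := by
  intro t ht u hu
  rcases eq_or_lt_of_le hu.1 with rfl | hlt
  · simp
  set g : ℝ → ℝ := fun w => -(x w)⁻¹ - 5 / 4 * w with hg
  have hIcc : Icc t u ⊆ Ioo t₀ b :=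
    fun w hw => ⟨lt_of_lt_of_le ht₂.1 (le_trans ht.1 hw.1), lt_of_le_of_lt hw.2 hu.2⟩
  have hxpos : ∀ w ∈ Icc t u, 0 < x w := fun w hw => lt_trans one_pos (hpos w (hIcc hw)).1
  have hgC : ContinuousOn g (Icc t u) := by
    apply ContinuousOn.sub
    · exact ((hx.continuousOn.mono (hIcc.trans Ioo_subset_Ico_self)).inv₀
        (fun w hw => (hxpos w hw).ne')).neg
    · exact continuousOn_const.mul continuousOn_id
  have hgd : ∀ w ∈ Ioo t u,
      HasDerivAt g (-(-deriv x w / x w ^ 2) - 5 / 4 * 1) w := by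
    intro w hw
    have hwI : w ∈ Ioo t₀ b := hIcc (Ioo_subset_Icc_self hw)
    exact (((dAt1 hx hwI).hasDerivAt).inv
      (hxpos w (Ioo_subset_Icc_self hw)).ne').neg.sub ((hasDerivAt_id w).const_mul (5 / 4))
  have hmono : MonotoneOn g (Icc t u) := by
    apply monotoneOn_of_deriv_nonneg (convex_Icc _ _) hgC
    · rw [interior_Icc]
      exact fun w hw => ((hgd w hw).differentiableAt).differentiableWithinAt
    · rw [interior_Icc]
      intro w hw
      rw [(hgd w hw).deriv]
      have hwI : w ∈ Ioo t₀ b := hIcc (Ioo_subset_Icc_self hw)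
      have h5 := h54 w ⟨le_trans ht.1 hw.1.le, hwI.2⟩
      have hxw : 0 < x w := hxpos w (Ioo_subset_Icc_self hw)
      have hx2 : 0 < x w ^ 2 := by positivity
      rw [neg_div, neg_neg, mul_one, sub_nonneg, le_div_iff₀ hx2]
      linarith
  have := hmono ⟨le_rfl, hu.1⟩ ⟨hu.1, le_rfl⟩ hu.1
  simp only [hg, one_div] at this ⊢
  linarith


end Stmt13Aux

set_option maxHeartbeats 1000000 in
/-- Suppose `x : [t₀,T) → ℝ` is `C²` with `x(t₀) > 1`, `x'(t₀) > 0`, and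
`x'' ≥ (n-1)x(x²-1) + 3x x'` whenever `x > 1` and `x' > 0` (so that `x'' > (3/2)(x²)'`
there).  If `[t₀, T)` is the maximal interval of existence of the underlying ODE system,
whose solutions have derivatives bounded in terms of `x` — encoded by the hypothesis that
if `T < ∞` then `x` is unbounded on `[t₀,T)` — then `T < ∞` and `x(t) → ∞` as `t → T`,
with `x(t) ≤ 4/(5(T-t))` for `t` near `T`.  (Here `T : EReal` may a priori be `∞`.) -/
theorem stmt13
    (n : ℕ) (hn : 2 ≤ n) (t₀ : ℝ) (T : EReal) (ht₀T : (t₀ : EReal) < T)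
    (x : ℝ → ℝ)
    (hx : ContDiffOn ℝ 2 x {t : ℝ | t₀ ≤ t ∧ (t : EReal) < T})
    (hx1 : 1 < x t₀) (hx'0 : 0 < deriv x t₀)
    (hconv : ∀ t, t₀ ≤ t → (t : EReal) < T → 1 < x t → 0 < deriv x t →
      ((n : ℝ) - 1) * x t * ((x t) ^ 2 - 1) + 3 * x t * deriv x t
        ≤ deriv (deriv x) t)
    -- maximality: if `T` is finite then `x` is unbounded on `[t₀, T)`
    (hmax : T ≠ ⊤ → ∀ M : ℝ, ∃ t, t₀ ≤ t ∧ (t : EReal) < T ∧ M < |x t|) :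
    T ≠ ⊤ ∧
    (∀ M : ℝ, ∃ t₁, t₀ ≤ t₁ ∧ (t₁ : EReal) < T ∧
      ∀ t, t₁ ≤ t → (t : EReal) < T → M ≤ x t) ∧
    (∃ t₂, t₀ ≤ t₂ ∧ (t₂ : EReal) < T ∧
      ∀ t, t₂ ≤ t → (t : EReal) < T → x t ≤ 4 / (5 * (T.toReal - t))) := by
  have hn1 : (1 : ℝ) ≤ (n : ℝ) - 1 := by
    have h2 : (2 : ℝ) ≤ (n : ℝ) := by exact_mod_cast hn
    linarith
  have hkey0 : ∀ t, t₀ ≤ t → (t : EReal) < T → 1 < x t → 0 < deriv x t →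
      3 * x t * deriv x t ≤ deriv (deriv x) t := by
    intro t h1 h2 h3 h4
    have hc := hconv t h1 h2 h3 h4
    have hxpos : (0 : ℝ) < x t := lt_trans one_pos h3
    have hsq : (0 : ℝ) < x t ^ 2 - 1 := by nlinarith
    have hnn : 0 ≤ ((n : ℝ) - 1) * x t * (x t ^ 2 - 1) :=
      mul_nonneg (mul_nonneg (by linarith) hxpos.le) hsq.le
    linarith
  by_cases hT : T = ⊤
  · exfalso
    subst hT
    have hsub : ∀ b : ℝ, Ico t₀ b ⊆ {t : ℝ | t₀ ≤ t ∧ (t : EReal) < ⊤} :=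
      fun b t ht => ⟨ht.1, EReal.coe_lt_top t⟩
    have hxb : ∀ b : ℝ, ContDiffOn ℝ 2 x (Ico t₀ b) := fun b => hx.mono (hsub b)
    have hkeyb : ∀ b : ℝ, ∀ t ∈ Ioo t₀ b, 1 < x t → 0 < deriv x t →
        3 * x t * deriv x t ≤ deriv (deriv x) t :=
      fun b t ht => hkey0 t ht.1.le (EReal.coe_lt_top t)
    obtain ⟨t₁, ht₁def⟩ : ∃ u, u = t₀ + 1 := ⟨_, rfl⟩
    have hpos1 := Stmt13Aux.pos (by linarith : t₀ < t₀ + 2) (hxb _) hx1 hx'0 (hkeyb _)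
    obtain ⟨hxt₁, hdt₁⟩ := hpos1 t₁ ⟨by simp only [ht₁def]; linarith,
      by simp only [ht₁def]; linarith⟩
    obtain ⟨c, hcdef⟩ : ∃ u, u = deriv x t₁ - 3 / 2 * x t₁ ^ 2 := ⟨_, rfl⟩
    obtain ⟨K, hKdef⟩ : ∃ u, u = (2 + 4 * |c|) / deriv x t₁ := ⟨_, rfl⟩
    have hKpos : 0 < K := by rw [hKdef]; exact div_pos (by positivity) hdt₁
    obtain ⟨t₂, ht₂def⟩ : ∃ u, u = t₁ + K := ⟨_, rfl⟩
    obtain ⟨b, hbdef⟩ : ∃ u, u = t₂ + 2 := ⟨_, rfl⟩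
    have hb : t₀ < b := by rw [hbdef, ht₂def, ht₁def]; linarith
    have hpos := Stmt13Aux.pos hb (hxb b) hx1 hx'0 (hkeyb b)
    have ht₁b : t₁ ∈ Ioo t₀ b := ⟨by rw [ht₁def]; linarith,
      by rw [hbdef, ht₂def]; linarith⟩
    have ht₂b : t₂ ∈ Ioo t₀ b := ⟨by rw [ht₂def, ht₁def]; linarith,
      by rw [hbdef]; linarith⟩
    have hεK : deriv x t₁ * K = 2 + 4 * |c| := by
      rw [hKdef, mul_div_cancel₀ _ hdt₁.ne']
    have hlin := Stmt13Aux.grow_lin (hxb b) hpos (hkeyb b) ht₁b t₂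
      ⟨by rw [ht₂def]; linarith, ht₂b.2⟩
    have hxt₂ : 3 + 4 * |c| ≤ x t₂ := by
      rw [show t₂ - t₁ = K by rw [ht₂def]; ring, hεK] at hlin
      linarith
    have hsq := Stmt13Aux.grow_sq (hxb b) hpos (hkeyb b) ht₁b
    have hmono : StrictMonoOn x (Ico t₀ b) := strictMonoOn_of_deriv_pos (convex_Ico _ _)
      (hxb b).continuousOn (by rw [interior_Ico]; exact fun t ht => (hpos t ht).2)
    have h54 : ∀ w ∈ Ico t₂ b, 5 / 4 * x w ^ 2 ≤ deriv x w := by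
      intro w hw
      have ht₁w : t₁ ≤ w := by
        have := hw.1; rw [ht₂def] at this; linarith
      have h1 := hsq w ⟨ht₁w, hw.2⟩
      have hxw : x t₂ ≤ x w := by
        rcases eq_or_lt_of_le hw.1 with rfl | h
        · exact le_rfl
        · exact (hmono ⟨ht₂b.1.le, ht₂b.2⟩ ⟨le_trans ht₂b.1.le hw.1, hw.2⟩ h).le
      have ha : 3 + 4 * |c| ≤ x w := le_trans hxt₂ hxw
      have hp1 : (3 + 4 * |c|) * (3 + 4 * |c|) ≤ x w * x w :=
        mul_le_mul ha ha (by positivity) (by linarith [abs_nonneg c])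
      have habs : -c ≤ |c| := neg_le_abs c
      nlinarith [h1, hp1, habs, abs_nonneg c, sq_nonneg (|c|), hcdef]
    have hblow := Stmt13Aux.blow (hxb b) hpos ht₂b h54 t₂ ⟨le_rfl, ht₂b.2⟩ (t₂ + 1)
      ⟨by linarith, by rw [hbdef]; linarith⟩
    have hxt₂1 : 1 < x (t₂ + 1) :=
      (hpos (t₂ + 1) ⟨by linarith [ht₂b.1], by rw [hbdef]; linarith⟩).1
    have h1d : 1 / x t₂ ≤ 1 / 3 := by
      apply one_div_le_one_div_of_le (by norm_num)
      linarith [abs_nonneg c]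
    have h2d : 0 < 1 / x (t₂ + 1) := by
      have h0 : (0 : ℝ) < x (t₂ + 1) := by linarith
      positivity
    linarith [hblow]
  · -- T is a real number
    have hTbot : T ≠ ⊥ := (lt_of_le_of_lt bot_le ht₀T).ne'
    obtain ⟨T', hT'def⟩ : ∃ u, u = T.toReal := ⟨_, rfl⟩
    have hTeq : ((T' : ℝ) : EReal) = T := by rw [hT'def]; exact EReal.coe_toReal hT hTbot
    have ht₀T' : t₀ < T' := by
      rw [← hTeq] at ht₀T; exact EReal.coe_lt_coe_iff.1 ht₀T
    have hsets : {t : ℝ | t₀ ≤ t ∧ (t : EReal) < T} = Ico t₀ T' := by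
      ext t
      simp only [mem_setOf_eq, mem_Ico, ← hTeq, EReal.coe_lt_coe_iff]
    rw [hsets] at hx
    have hkey : ∀ t ∈ Ioo t₀ T', 1 < x t → 0 < deriv x t →
        3 * x t * deriv x t ≤ deriv (deriv x) t :=
      fun t ht => hkey0 t ht.1.le (by rw [← hTeq]; exact EReal.coe_lt_coe_iff.2 ht.2)
    have hpos := Stmt13Aux.pos ht₀T' hx hx1 hx'0 hkey
    have hmono : StrictMonoOn x (Ico t₀ T') := strictMonoOn_of_deriv_pos (convex_Ico _ _)
      hx.continuousOn (by rw [interior_Ico]; exact fun t ht => (hpos t ht).2)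
    have hposIco : ∀ t ∈ Ico t₀ T', 1 < x t := by
      intro t ht
      rcases eq_or_lt_of_le ht.1 with rfl | h
      · exact hx1
      · exact (hpos t ⟨h, ht.2⟩).1
    have hcl2 : ∀ M : ℝ, ∃ t₁, t₀ ≤ t₁ ∧ t₁ < T' ∧ ∀ t, t₁ ≤ t → t < T' → M ≤ x t := by
      intro M
      obtain ⟨t, ht0, htT, hM⟩ := hmax hT M
      have htT' : t < T' := by
        rw [← hTeq] at htT; exact EReal.coe_lt_coe_iff.1 htT
      have hxt : M < x t := by
        have h1 := hposIco t ⟨ht0, htT'⟩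
        calc M < |x t| := hM
          _ = x t := abs_of_pos (by linarith)
      refine ⟨t, ht0, htT', fun u hu huT => ?_⟩
      rcases eq_or_lt_of_le hu with rfl | h
      · exact hxt.le
      · exact le_of_lt (lt_of_lt_of_le hxt
          (hmono ⟨ht0, htT'⟩ ⟨le_trans ht0 hu, huT⟩ h).le)
    refine ⟨hT, ?_, ?_⟩
    · intro M
      obtain ⟨t₁, h1, h2, h3⟩ := hcl2 M
      exact ⟨t₁, h1, by rw [← hTeq]; exact EReal.coe_lt_coe_iff.2 h2,
        fun t ht htT => h3 t ht (by rw [← hTeq] at htT; exact EReal.coe_lt_coe_iff.1 htT)⟩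
    · -- blow-up rate
      obtain ⟨t₁, ht₁def⟩ : ∃ u, u = (t₀ + T') / 2 := ⟨_, rfl⟩
      have ht₁ : t₁ ∈ Ioo t₀ T' := ⟨by rw [ht₁def]; linarith, by rw [ht₁def]; linarith⟩
      obtain ⟨c, hcdef⟩ : ∃ u, u = deriv x t₁ - 3 / 2 * x t₁ ^ 2 := ⟨_, rfl⟩
      obtain ⟨t₁', h1', h2', h3'⟩ := hcl2 (3 + 4 * |c|)
      obtain ⟨t₂, ht₂def⟩ : ∃ u, u = max t₁' t₁ := ⟨_, rfl⟩
      have ht₂mem : t₂ ∈ Ioo t₀ T' := by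
        rw [ht₂def]
        exact ⟨lt_of_lt_of_le ht₁.1 (le_max_right _ _), max_lt h2' ht₁.2⟩
      have hxt₂ : 3 + 4 * |c| ≤ x t₂ := h3' t₂ (by rw [ht₂def]; exact le_max_left _ _) ht₂mem.2
      have hsq₂ := Stmt13Aux.grow_sq hx hpos hkey ht₂mem
      have hsq₁ := Stmt13Aux.grow_sq hx hpos hkey ht₁
      have hc₂ : c ≤ deriv x t₂ - 3 / 2 * x t₂ ^ 2 := by
        have := hsq₁ t₂ ⟨by rw [ht₂def]; exact le_max_right _ _, ht₂mem.2⟩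
        linarith
      have h54 : ∀ w ∈ Ico t₂ T', 5 / 4 * x w ^ 2 ≤ deriv x w := by
        intro w hw
        have h1 := hsq₂ w hw
        have hxw : x t₂ ≤ x w := by
          rcases eq_or_lt_of_le hw.1 with rfl | h
          · exact le_rfl
          · exact (hmono ⟨ht₂mem.1.le, ht₂mem.2⟩ ⟨le_trans ht₂mem.1.le hw.1, hw.2⟩ h).le
        have ha : 3 + 4 * |c| ≤ x w := le_trans hxt₂ hxw
        have hp1 : (3 + 4 * |c|) * (3 + 4 * |c|) ≤ x w * x w :=
          mul_le_mul ha ha (by positivity) (by linarith [abs_nonneg c])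
        have habs : -c ≤ |c| := neg_le_abs c
        nlinarith [h1, hp1, habs, abs_nonneg c, sq_nonneg (|c|), hc₂, hcdef]
      have hblow := Stmt13Aux.blow hx hpos ht₂mem h54
      refine ⟨t₂, ht₂mem.1.le, by rw [← hTeq]; exact EReal.coe_lt_coe_iff.2 ht₂mem.2, ?_⟩
      intro t ht htT
      have htT' : t < T' := by
        rw [← hTeq] at htT; exact EReal.coe_lt_coe_iff.1 htT
      have hxt : (0 : ℝ) < x t := by
        linarith [hposIco t ⟨le_trans ht₂mem.1.le ht, htT'⟩]
      have hineq : ∀ u ∈ Ioo t T', 5 / 4 * (u - t) ≤ 1 / x t := by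
        intro u hu
        have hb := hblow t ⟨ht, htT'⟩ u ⟨hu.1.le, hu.2⟩
        have hxu : (0 : ℝ) < x u := by
          linarith [hposIco u ⟨le_trans (le_trans ht₂mem.1.le ht) hu.1.le, hu.2⟩]
        have hxu' : 0 < 1 / x u := by positivity
        linarith
      have hlim : 5 / 4 * (T' - t) ≤ 1 / x t := by
        have htend : Filter.Tendsto (fun u : ℝ => 5 / 4 * (u - t))
            (nhdsWithin T' (Iio T')) (nhds (5 / 4 * (T' - t))) :=
          ((continuous_const.mul (continuous_id.sub continuous_const)).tendsto T').mono_left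
            nhdsWithin_le_nhds
        refine le_of_tendsto htend ?_
        filter_upwards [Ioo_mem_nhdsLT_of_mem (⟨htT', le_rfl⟩ : T' ∈ Ioc t T')] with u hu
        exact hineq u hu
      have hTt : (0 : ℝ) < T' - t := by linarith
      rw [← hT'def]
      rw [le_div_iff₀ (by positivity : (0 : ℝ) < 5 * (T' - t))]
      have hmul : x t * (5 / 4 * (T' - t)) ≤ x t * (1 / x t) :=
        mul_le_mul_of_nonneg_left hlim hxt.le
      rw [mul_one_div, div_self hxt.ne'] at hmul
      nlinarith [hmul]
end

section
/- If (ω,x,y) is a solution on (S,∞) with ω > 0, -1 < x(t) < 1 for all t, and ∫_{t₀}^{∞} ω(σ)dσ = ∞, then lim_{t→∞} y(t) = -∞. -/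
open Real Set MeasureTheory

set_option maxHeartbeats 2000000 in
/-- If `(ω, x, y)` is a solution of the system `ω' = xω`,
`x' = x² - xy + n - 1 - λω²`, `y' = xy - nx² - λω²` on `(S, ∞)` with `ω > 0`,
`-1 < x(t) < 1` for all `t`, and `∫_{t₀}^{∞} ω(σ) dσ = ∞` (i.e. `ω` is not integrable
on `(t₀, ∞)`), then `y(t) → -∞` as `t → ∞`. -/
theorem stmt15
    (n : ℕ) (hn : 2 ≤ n) (lam : ℝ) (hlam : 0 < lam)
    (S : ℝ) (ω x y : ℝ → ℝ)
    (hsys : ∀ t ∈ Set.Ioi S,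
      HasDerivAt ω (x t * ω t) t ∧
      HasDerivAt x ((x t) ^ 2 - x t * y t + (n : ℝ) - 1 - lam * (ω t) ^ 2) t ∧
      HasDerivAt y (x t * y t - (n : ℝ) * (x t) ^ 2 - lam * (ω t) ^ 2) t)
    (hωpos : ∀ t ∈ Set.Ioi S, 0 < ω t)
    (hx : ∀ t ∈ Set.Ioi S, -1 < x t ∧ x t < 1)
    (t₀ : ℝ) (ht₀ : t₀ ∈ Set.Ioi S)
    (hdiv : ¬ IntegrableOn ω (Set.Ioi t₀) volume) :
    Filter.Tendsto y Filter.atTop Filter.atBot := by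
  have hn1 : (1:ℝ) ≤ (n:ℝ) - 1 := by
    have : (2:ℝ) ≤ (n:ℝ) := by exact_mod_cast hn
    linarith
  have hS₀ : S < t₀ := ht₀
  have hsub : Set.Ici t₀ ⊆ Set.Ioi S := fun t ht => lt_of_lt_of_le hS₀ ht
  have hsubIcc : ∀ {p q : ℝ}, t₀ ≤ p → Set.Icc p q ⊆ Set.Ioi S :=
    fun {p q} hp t ht => hsub (le_trans hp ht.1)
  have hω2 : ∀ t ∈ Set.Ioi S, (0:ℝ) < ω t ^ 2 := fun t ht => pow_pos (hωpos t ht) 2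
  have hxsq : ∀ t ∈ Set.Ioi S, x t ^ 2 ≤ 1 := by
    intro t ht
    nlinarith [(hx t ht).1, (hx t ht).2]
  -- continuity
  have hcω : ∀ t ∈ Set.Ioi S, ContinuousAt ω t := fun t ht => (hsys t ht).1.continuousAt
  have hcx : ∀ t ∈ Set.Ioi S, ContinuousAt x t := fun t ht => (hsys t ht).2.1.continuousAt
  have hcy : ∀ t ∈ Set.Ioi S, ContinuousAt y t := fun t ht => (hsys t ht).2.2.continuousAt
  -- derivatives of auxiliary functions
  have hdB : ∀ t ∈ Set.Ioi S, HasDerivAt (fun t => (x t - y t) / ω t ^ 2)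
      (((n:ℝ) - 1) * (1 + x t ^ 2) / ω t ^ 2) t := by
    intro t ht
    have hne : ω t ^ 2 ≠ 0 := ne_of_gt (hω2 t ht)
    have h1 := ((hsys t ht).2.1).sub ((hsys t ht).2.2)
    have h2 := ((hsys t ht).1).pow 2
    have h3 := h1.div h2 hne
    refine h3.congr_deriv ?_
    have hω : ω t ≠ 0 := ne_of_gt (hωpos t ht)
    simp only [Pi.pow_apply, Pi.sub_apply, Nat.cast_ofNat]
    field_simp
    ring
  have hdm : ∀ t ∈ Set.Ioi S, HasDerivAt (fun t => -(x t + y t))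
      (((n:ℝ) - 1) * (x t ^ 2 - 1) + 2 * lam * ω t ^ 2) t := by
    intro t ht
    have h1 := (((hsys t ht).2.1).add ((hsys t ht).2.2)).neg
    refine h1.congr_deriv ?_
    ring
  have hdw : ∀ t ∈ Set.Ioi S, HasDerivAt (fun t => x t + y t)
      (((n:ℝ) - 1) * (1 - x t ^ 2) - 2 * lam * ω t ^ 2) t := by
    intro t ht
    have h1 := ((hsys t ht).2.1).add ((hsys t ht).2.2)
    refine h1.congr_deriv ?_
    ring
  have hcB' : ∀ t ∈ Set.Ioi S, ContinuousAt (fun t => ((n:ℝ) - 1) * (1 + x t ^ 2) / ω t ^ 2) t := by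
    intro t ht
    exact (continuousAt_const.mul (continuousAt_const.add ((hcx t ht).pow 2))).div
      ((hcω t ht).pow 2) (ne_of_gt (hω2 t ht))
  have hcw' : ∀ t ∈ Set.Ioi S, ContinuousAt
      (fun t => ((n:ℝ) - 1) * (1 - x t ^ 2) - 2 * lam * ω t ^ 2) t := by
    intro t ht
    exact (continuousAt_const.mul (continuousAt_const.sub ((hcx t ht).pow 2))).sub
      (continuousAt_const.mul ((hcω t ht).pow 2))
  have hciv : ∀ t ∈ Set.Ioi S, ContinuousAt (fun t => (ω t ^ 2)⁻¹) t := by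
    intro t ht
    exact ((hcω t ht).pow 2).inv₀ (ne_of_gt (hω2 t ht))
  -- interval integrability of continuous functions
  have hII : ∀ (f : ℝ → ℝ), (∀ t ∈ Set.Ioi S, ContinuousAt f t) →
      ∀ {p q : ℝ}, t₀ ≤ p → p ≤ q → IntervalIntegrable f volume p q := by
    intro f hf p q hp hq
    apply ContinuousOn.intervalIntegrable
    intro t ht
    rw [Set.uIcc_of_le hq] at ht
    exact (hf t (hsubIcc hp ht)).continuousWithinAt
  -- FTC wrapper
  have hFTC : ∀ (f f' : ℝ → ℝ), (∀ t ∈ Set.Ioi S, HasDerivAt f (f' t) t) →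
      (∀ t ∈ Set.Ioi S, ContinuousAt f' t) →
      ∀ {p q : ℝ}, t₀ ≤ p → p ≤ q → ∫ t in p..q, f' t = f q - f p := by
    intro f f' hd hc p q hp hq
    refine intervalIntegral.integral_eq_sub_of_hasDerivAt (fun t ht => hd t ?_) (hII f' hc hp hq)
    rw [Set.uIcc_of_le hq] at ht
    exact hsubIcc hp ht
  by_cases hint : IntegrableOn (fun t => (ω t ^ 2)⁻¹) (Set.Ioi t₀) volume
  · -- CASE 1
    obtain ⟨J, hJ, hIT⟩ : ∃ J:ℝ, 0 < J ∧ ∀ T, t₀ ≤ T → ∫ t in t₀..T, (ω t ^ 2)⁻¹ ≤ J := by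
      have hI0 : 0 ≤ ∫ t in Set.Ioi t₀, (ω t ^ 2)⁻¹ :=
        setIntegral_nonneg measurableSet_Ioi fun t _ => inv_nonneg.mpr (sq_nonneg _)
      refine ⟨(∫ t in Set.Ioi t₀, (ω t ^ 2)⁻¹) + 1, by linarith, ?_⟩
      intro T hT
      rw [intervalIntegral.integral_of_le hT]
      have h1 : ∫ t in Set.Ioc t₀ T, (ω t ^ 2)⁻¹ ≤ ∫ t in Set.Ioi t₀, (ω t ^ 2)⁻¹ :=
        setIntegral_mono_set hint (Filter.Eventually.of_forall fun t => inv_nonneg.mpr (sq_nonneg _))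
          (HasSubset.Subset.eventuallyLE Set.Ioc_subset_Ioi_self)
      linarith
    have key : ∀ T, t₀ ≤ T → ∃ K : ℝ, (T - t₀)^2 ≤ K * J ∧
        y T ≤ (1 + (x t₀ + y t₀)) + ((n:ℝ) - 1) * (T - t₀) - 2 * lam * K := by
      intro T hT
      have hs0 : 0 ≤ T - t₀ := sub_nonneg.mpr hT
      set c := (T - t₀) / J with hcdef
      have hc0 : 0 ≤ c := div_nonneg hs0 hJ.le
      refine ⟨∫ t in t₀..T, ω t ^ 2, ?_, ?_⟩
      · -- Cauchy-Schwarz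
        have hIω2 : IntervalIntegrable (fun t => ω t ^ 2) volume t₀ T :=
          hII _ (fun t ht => (hcω t ht).pow 2) le_rfl hT
        have hIiv : IntervalIntegrable (fun t => (ω t ^ 2)⁻¹) volume t₀ T := hII _ hciv le_rfl hT
        have hnn : 0 ≤ ∫ t in t₀..T, (ω t - c * (ω t)⁻¹)^2 :=
          intervalIntegral.integral_nonneg hT fun u _ => sq_nonneg _
        have hEeq : Set.EqOn (fun t => (ω t - c * (ω t)⁻¹)^2)
            (fun t => (ω t ^ 2 - 2*c) + c^2 * (ω t ^ 2)⁻¹) (Set.uIcc t₀ T) := by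
          intro t ht
          rw [Set.uIcc_of_le hT] at ht
          have hωt : ω t ≠ 0 := ne_of_gt (hωpos t (hsubIcc le_rfl ht))
          field_simp
          ring
        rw [intervalIntegral.integral_congr hEeq,
          intervalIntegral.integral_add (hIω2.sub intervalIntegrable_const) (hIiv.const_mul _),
          intervalIntegral.integral_sub hIω2 intervalIntegrable_const,
          intervalIntegral.integral_const, intervalIntegral.integral_const_mul] at hnn
        have h2 : c^2 * ∫ t in t₀..T, (ω t ^ 2)⁻¹ ≤ c^2 * J :=
          mul_le_mul_of_nonneg_left (hIT T hT) (sq_nonneg c)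
        have hcsJ : c * J = T - t₀ := by rw [hcdef]; field_simp
        have hK1 : 2*c*(T - t₀) - c^2*J ≤ ∫ t in t₀..T, ω t ^ 2 := by
          simp only [smul_eq_mul] at hnn
          linarith
        have hfin : (2*c*(T - t₀) - c^2*J)*J = (T - t₀)^2 := by rw [← hcsJ]; ring
        calc (T - t₀)^2 = (2*c*(T - t₀) - c^2*J)*J := hfin.symm
          _ ≤ (∫ t in t₀..T, ω t ^ 2) * J := mul_le_mul_of_nonneg_right hK1 hJ.le
      · -- y T bound
        have hT' : T ∈ Set.Ioi S := hsub hT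
        have hFTCw := hFTC _ _ hdw hcw' le_rfl hT
        have hsplit : ∫ t in t₀..T, (((n:ℝ) - 1) * (1 - x t ^ 2) - 2 * lam * ω t ^ 2) =
            (∫ t in t₀..T, ((n:ℝ) - 1) * (1 - x t ^ 2)) - ∫ t in t₀..T, 2 * lam * ω t ^ 2 :=
          intervalIntegral.integral_sub
            (hII _ (fun t ht => continuousAt_const.mul (continuousAt_const.sub ((hcx t ht).pow 2)))
              le_rfl hT)
            (hII _ (fun t ht => continuousAt_const.mul ((hcω t ht).pow 2)) le_rfl hT)
        have hmono1 : ∫ t in t₀..T, ((n:ℝ) - 1) * (1 - x t ^ 2) ≤ ((n:ℝ)-1) * (T - t₀) := by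
          have h1 : ∫ t in t₀..T, ((n:ℝ) - 1) * (1 - x t ^ 2) ≤ ∫ _t in t₀..T, ((n:ℝ)-1) := by
            apply intervalIntegral.integral_mono_on hT
              (hII _ (fun t ht => continuousAt_const.mul (continuousAt_const.sub ((hcx t ht).pow 2)))
                le_rfl hT) intervalIntegrable_const
            intro u hu
            have hu' := hsubIcc le_rfl hu
            show ((n:ℝ) - 1) * (1 - x u ^ 2) ≤ (n:ℝ) - 1
            nlinarith [hxsq u hu']
          rw [intervalIntegral.integral_const, smul_eq_mul] at h1
          calc ∫ t in t₀..T, ((n:ℝ) - 1) * (1 - x t ^ 2) ≤ (T - t₀) * ((n:ℝ)-1) := h1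
            _ = ((n:ℝ)-1) * (T - t₀) := by ring
        have hconst : ∫ t in t₀..T, 2 * lam * ω t ^ 2 = 2*lam*(∫ t in t₀..T, ω t ^ 2) :=
          intervalIntegral.integral_const_mul _ _
        have hxT := (hx T hT').1
        rw [hsplit, hconst] at hFTCw
        linarith
    rw [Filter.tendsto_atBot]
    intro b
    filter_upwards [Filter.eventually_ge_atTop
      (t₀ + max (J*(n:ℝ)/(2*lam)) (max 0 ((1 + (x t₀ + y t₀)) - b)))] with T hT
    have hmax : max (J*(n:ℝ)/(2*lam)) (max 0 ((1 + (x t₀ + y t₀)) - b)) ≤ T - t₀ := by linarith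
    have h1 : J*(n:ℝ) ≤ (T - t₀)*(2*lam) :=
      (div_le_iff₀ (by positivity)).mp (le_trans (le_max_left _ _) hmax)
    have h2 : (1 + (x t₀ + y t₀)) - b ≤ T - t₀ :=
      le_trans (le_trans (le_max_right 0 _) (le_max_right _ _)) hmax
    have hs0 : 0 ≤ T - t₀ :=
      le_trans (le_trans (le_max_left 0 _) (le_max_right _ _)) hmax
    obtain ⟨K, hKJ, hyT⟩ := key T (by linarith)
    clear hmax hT
    have h3 : (n:ℝ)*(T-t₀) ≤ 2*lam*K := by
      have hh := mul_le_mul_of_nonneg_right h1 hs0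
      have hh2 := mul_le_mul_of_nonneg_left hKJ (le_of_lt (by positivity : (0:ℝ) < 2*lam))
      nlinarith [hh, hh2, hJ]
    have hncast : ((n:ℝ)-1) * (T - t₀) - 2*lam*K ≤ -(T - t₀) := by nlinarith [h3]
    linarith
  · -- CASE 2
    set B : ℝ → ℝ := fun t => (x t - y t) / ω t ^ 2 with hBdef
    by_contra hcon
    rw [Filter.tendsto_atBot] at hcon
    push_neg at hcon
    obtain ⟨b₀, hb₀⟩ := hcon
    simp only [← not_le] at hb₀
    -- constants
    obtain ⟨M, hM4, hMub⟩ : ∃ M:ℝ, 4 ≤ M ∧ 2*((1 - b₀) + 2) ≤ M :=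
      ⟨max 4 (2*((1 - b₀) + 2)), le_max_left _ _, le_max_right _ _⟩
    have hM0 : (0:ℝ) < M := by linarith
    obtain ⟨c, hcdef⟩ : ∃ c:ℝ, c = ((n:ℝ)-1)/M := ⟨_, rfl⟩
    have hc0 : 0 < c := by rw [hcdef]; exact div_pos (by linarith) hM0
    have hcM : c * M = (n:ℝ)-1 := by rw [hcdef]; field_simp
    obtain ⟨Bs, hBs1, hBsub⟩ : ∃ Bs:ℝ, 1 ≤ Bs ∧ 2*lam*M^2/((n:ℝ)-1) ≤ Bs :=
      ⟨max 1 (2*lam*M^2/((n:ℝ)-1)), le_max_left _ _, le_max_right _ _⟩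
    have hBs0 : (0:ℝ) < Bs := by linarith
    have hcBs : 0 < c*Bs := mul_pos hc0 hBs0
    have hK0 : 2*lam*M/(c*Bs) ≤ 1 := by
      have h1 : 2*lam*M^2 ≤ Bs*((n:ℝ)-1) := (div_le_iff₀ (by linarith)).mp hBsub
      have h3 : c*Bs*M = Bs*((n:ℝ)-1) := by rw [← hcM]; ring
      have h2 : 2*lam*M ≤ c*Bs := by nlinarith [h1, h3, hM0]
      rw [div_le_one hcBs]; linarith
    -- unbounded partial integrals of (ω²)⁻¹
    have hunb : ∀ C : ℝ, ∃ T, t₀ < T ∧ C ≤ ∫ t in t₀..T, (ω t ^ 2)⁻¹ := by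
      intro C
      by_contra hno
      push_neg at hno
      apply hint
      apply MeasureTheory.integrableOn_Ioi_of_intervalIntegral_norm_bounded C t₀
        (fun T : ℝ => ?_) (Filter.tendsto_id (x := Filter.atTop (α := ℝ)))
      · filter_upwards [Filter.eventually_gt_atTop t₀] with T hT
        have heq : ∫ u in t₀..(id T : ℝ), ‖(ω u ^ 2)⁻¹‖ = ∫ u in t₀..T, (ω u ^ 2)⁻¹ :=
          intervalIntegral.integral_congr fun u _ => abs_of_nonneg (inv_nonneg.mpr (sq_nonneg _))
        rw [heq]
        exact (hno T hT).le
      · rcases le_or_gt T t₀ with h | h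
        · rw [show Set.Ioc t₀ (id T : ℝ) = ∅ from Set.Ioc_eq_empty (not_lt.mpr h)]
          exact integrableOn_empty
        · exact (ContinuousOn.integrableOn_Icc
            (fun u hu => (hciv u (hsubIcc le_rfl hu)).continuousWithinAt)).mono_set
            Set.Ioc_subset_Icc_self
    -- B is monotone on [t₀,∞)
    have hBmono : MonotoneOn B (Set.Ici t₀) := by
      apply monotoneOn_of_deriv_nonneg (convex_Ici t₀)
      · intro t ht
        exact ((hdB t (hsub ht)).continuousAt).continuousWithinAt
      · intro t ht
        rw [interior_Ici] at ht
        exact ((hdB t (hsub (Set.mem_Ici.mpr (le_of_lt ht)))).differentiableAt).differentiableWithinAt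
      · intro t ht
        rw [interior_Ici] at ht
        have ht' := hsub (Set.mem_Ici.mpr (le_of_lt ht))
        rw [(hdB t ht').deriv]
        exact div_nonneg (mul_nonneg (by linarith) (by positivity)) (le_of_lt (hω2 t ht'))
    -- find T₁ with B T₁ ≥ Bs
    obtain ⟨T₁, hT₁gt, hT₁i⟩ := hunb ((Bs - B t₀)/((n:ℝ)-1))
    have hBT₁ : Bs ≤ B T₁ := by
      have hFTCB := hFTC _ _ hdB hcB' le_rfl hT₁gt.le
      have hmono : ∫ t in t₀..T₁, ((n:ℝ)-1) * (ω t^2)⁻¹ ≤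
          ∫ t in t₀..T₁, ((n:ℝ) - 1) * (1 + x t ^ 2) / ω t ^ 2 := by
        apply intervalIntegral.integral_mono_on hT₁gt.le
          ((hII _ hciv le_rfl hT₁gt.le).const_mul _) (hII _ hcB' le_rfl hT₁gt.le)
        intro u hu
        have hu' := hsubIcc le_rfl hu
        rw [div_eq_mul_inv]
        have h1 : (0:ℝ) ≤ (ω u ^2)⁻¹ := inv_nonneg.mpr (sq_nonneg _)
        nlinarith [mul_nonneg (mul_nonneg (by linarith : (0:ℝ) ≤ (n:ℝ)-1) (sq_nonneg (x u))) h1]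
      rw [intervalIntegral.integral_const_mul] at hmono
      have h2 : ((n:ℝ)-1) * ((Bs - B t₀)/((n:ℝ)-1)) ≤ ((n:ℝ)-1) * ∫ t in t₀..T₁, (ω t^2)⁻¹ :=
        mul_le_mul_of_nonneg_left hT₁i (by linarith)
      have h3 : ((n:ℝ)-1) * ((Bs - B t₀)/((n:ℝ)-1)) = Bs - B t₀ := by field_simp
      rw [hFTCB] at hmono
      linarith
    -- pick t₁ ≥ T₁ with y t₁ > b₀
    obtain ⟨t₁, hyt₁, ht₁T⟩ := (hb₀.and_eventually (Filter.eventually_ge_atTop T₁)).exists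
    have hyt₁' : b₀ < y t₁ := not_le.mp hyt₁
    have ht₁0 : t₀ ≤ t₁ := le_trans hT₁gt.le ht₁T
    have hmem : ∀ {t : ℝ}, t₁ ≤ t → t ∈ Set.Ioi S := fun {t} ht => hsub (le_trans ht₁0 ht)
    have hBge : ∀ t, t₁ ≤ t → Bs ≤ B t := by
      intro t ht
      refine le_trans hBT₁ (hBmono (Set.mem_Ici.mpr hT₁gt.le)
        (Set.mem_Ici.mpr (le_trans ht₁0 ht)) (le_trans ht₁T ht))
    have hgeq : ∀ t ∈ Set.Ioi S, x t - y t = B t * ω t ^ 2 := by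
      intro t ht
      have hB : B t = (x t - y t)/ ω t^2 := rfl
      rw [hB, div_mul_cancel₀ _ (ne_of_gt (hω2 t ht))]
    have hgpos : ∀ t, t₁ ≤ t → 0 < x t - y t := by
      intro t ht
      rw [hgeq t (hmem ht)]
      exact mul_pos (lt_of_lt_of_le (by linarith : (0:ℝ) < Bs) (hBge t ht)) (hω2 t (hmem ht))
    have hm2 : ∀ t, t₁ ≤ t → x t - y t ≤ -(x t + y t) + 2 := by
      intro t ht
      have := (hx t (hmem ht)).2
      linarith
    have hmt₁ : -(x t₁ + y t₁) + 2 ≤ M/2 := by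
      have h1 := (hx t₁ (hmem le_rfl)).1
      linarith
    -- exponential auxiliary derivative
    have hexp : ∀ u : ℝ, HasDerivAt (fun v => Real.exp (-(c*(v - t₁))))
        (Real.exp (-(c*(u - t₁))) * -(c*1)) u := by
      intro u
      exact ((((hasDerivAt_id u).sub_const t₁).const_mul c).neg).exp
    -- Step A: exponential growth of B while m stays ≤ M
    have stepA : ∀ T', t₁ ≤ T' → (∀ u, t₁ ≤ u → u < T' → -(x u + y u) + 2 ≤ M) →
        ∀ t, t₁ ≤ t → t ≤ T' → Bs * Real.exp (c*(t - t₁)) ≤ B t := by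
      intro T' hT' hbnd t ht htT
      have hφmono : MonotoneOn (fun u => B u * Real.exp (-(c*(u - t₁)))) (Set.Icc t₁ T') := by
        apply monotoneOn_of_deriv_nonneg (convex_Icc _ _)
        · intro u hu
          exact (((hdB u (hmem hu.1)).continuousAt).mul (hexp u).continuousAt).continuousWithinAt
        · intro u hu
          rw [interior_Icc] at hu
          exact (((hdB u (hmem hu.1.le)).mul (hexp u)).differentiableAt).differentiableWithinAt
        · intro u hu
          rw [interior_Icc] at hu
          have hu' := hmem hu.1.le
          rw [show deriv (fun u => B u * Real.exp (-(c*(u - t₁)))) u = _ from (((hdB u hu')).mul (hexp u)).deriv]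
          have hgM : x u - y u ≤ M := le_trans (hm2 u hu.1.le) (hbnd u hu.1.le hu.2)
          have hkey : c * (x u - y u) ≤ ((n:ℝ)-1) * (1 + x u ^2) := by
            nlinarith [sq_nonneg (x u), hgpos u hu.1.le, hc0.le, hcM,
              mul_le_mul_of_nonneg_left hgM hc0.le]
          have hBu : B u = (x u - y u)/ω u ^2 := rfl
          have hB'div : c * B u ≤ ((n:ℝ)-1) * (1 + x u ^2) / ω u ^2 := by
            rw [hBu, ← mul_div_assoc]
            exact (div_le_div_iff_of_pos_right (hω2 u hu')).mpr hkey
          nlinarith [hB'div, Real.exp_pos (-(c*(u - t₁))),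
            mul_le_mul_of_nonneg_right hB'div (Real.exp_pos (-(c*(u - t₁)))).le]
      have h1 := hφmono (Set.mem_Icc.mpr ⟨le_rfl, hT'⟩) (Set.mem_Icc.mpr ⟨ht, htT⟩) ht
      simp only [sub_self, mul_zero, neg_zero, Real.exp_zero, mul_one] at h1
      have e1 : Real.exp (-(c*(t-t₁))) * Real.exp (c*(t-t₁)) = 1 := by
        rw [← Real.exp_add]; simp
      calc Bs * Real.exp (c*(t-t₁)) ≤ B t₁ * Real.exp (c*(t-t₁)) :=
            mul_le_mul_of_nonneg_right (hBge t₁ le_rfl) (Real.exp_pos _).le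
        _ ≤ (B t * Real.exp (-(c*(t-t₁)))) * Real.exp (c*(t-t₁)) :=
            mul_le_mul_of_nonneg_right h1 (Real.exp_pos _).le
        _ = B t := by rw [mul_assoc, e1, mul_one]
    -- Bootstrap
    have hboot : ∀ t, t₁ ≤ t → -(x t + y t) + 2 ≤ M := by
      by_contra hbad
      push_neg at hbad
      obtain ⟨t₂, ht₂, hMt₂⟩ := hbad
      set Bad := {t : ℝ | t₁ ≤ t ∧ M ≤ -(x t + y t) + 2} with hBadDef
      have hBadne : Bad.Nonempty := ⟨t₂, ht₂, hMt₂.le⟩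
      have hBadbdd : BddBelow Bad := ⟨t₁, fun t ht => ht.1⟩
      set T := sInf Bad with hTdef
      have hT₁le : t₁ ≤ T := le_csInf hBadne fun t ht => ht.1
      have hMT : M ≤ -(x T + y T) + 2 := by
        obtain ⟨u, hu, hulim⟩ := mem_closure_iff_seq_limit.mp (csInf_mem_closure hBadne hBadbdd)
        have hcm : ContinuousAt (fun t => -(x t + y t) + 2) T :=
          (((hcx _ (hmem hT₁le)).add (hcy _ (hmem hT₁le))).neg).add continuousAt_const
        have hlim2 : Filter.Tendsto (fun k => -(x (u k) + y (u k)) + 2) Filter.atTop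
            (nhds (-(x T + y T) + 2)) := hcm.tendsto.comp hulim
        exact ge_of_tendsto hlim2 (Filter.Eventually.of_forall fun k => (hu k).2)
      have hTgt : t₁ < T := by
        rcases lt_or_eq_of_le hT₁le with h | h
        · exact h
        · exfalso; rw [← h] at hMT; linarith
      have hlt : ∀ u, t₁ ≤ u → u < T → -(x u + y u) + 2 ≤ M := by
        intro u h1 h2
        by_contra h3
        push_neg at h3
        exact absurd (csInf_le hBadbdd ⟨h1, h3.le⟩) (not_le.mpr h2)
      have hstepA := stepA T hT₁le hlt
      -- ψ antitone on [t₁, T]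
      have hψ : AntitoneOn (fun u => -(x u + y u) +
          (2*lam*M/(c*Bs)) * Real.exp (-(c*(u - t₁)))) (Set.Icc t₁ T) := by
        apply antitoneOn_of_deriv_nonpos (convex_Icc _ _)
        · intro u hu
          exact ((((hcx _ (hmem hu.1)).add (hcy _ (hmem hu.1))).neg).add
            (continuousAt_const.mul (hexp u).continuousAt)).continuousWithinAt
        · intro u hu
          rw [interior_Icc] at hu
          exact (((hdm u (hmem hu.1.le)).add
            (HasDerivAt.const_mul (2*lam*M/(c*Bs)) (hexp u))).differentiableAt).differentiableWithinAt
        · intro u hu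
          rw [interior_Icc] at hu
          have hu' := hmem hu.1.le
          rw [show deriv (fun u => -(x u + y u) + (2*lam*M/(c*Bs)) * Real.exp (-(c*(u - t₁)))) u = _ from ((hdm u hu').add (HasDerivAt.const_mul (2*lam*M/(c*Bs)) (hexp u))).deriv]
          have hx2 := hxsq u hu'
          have hBu := hstepA u hu.1.le hu.2.le
          have hgu : x u - y u ≤ M := le_trans (hm2 u hu.1.le) (hlt u hu.1.le hu.2)
          have hωB : ω u^2 * (Bs * Real.exp (c*(u-t₁))) ≤ M := by
            calc ω u^2 * (Bs * Real.exp (c*(u-t₁))) ≤ ω u^2 * B u :=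
                  mul_le_mul_of_nonneg_left hBu (sq_nonneg _)
              _ = x u - y u := by rw [hgeq u hu']; ring
              _ ≤ M := hgu
          have hω2le : ω u^2 ≤ M / (Bs * Real.exp (c*(u-t₁))) :=
            (le_div_iff₀ (by positivity)).mpr hωB
          have hmain : 2*lam*(ω u^2) ≤ 2*lam*M/Bs * (Real.exp (c*(u-t₁)))⁻¹ := by
            calc 2*lam*(ω u^2) ≤ 2*lam*(M/(Bs*Real.exp (c*(u-t₁)))) :=
                  mul_le_mul_of_nonneg_left hω2le (by positivity)
              _ = 2*lam*M/Bs * (Real.exp (c*(u-t₁)))⁻¹ := by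
                  have hE := (Real.exp_pos (c*(u-t₁))).ne'
                  field_simp
          have hterm : (2*lam*M/(c*Bs))*(Real.exp (-(c*(u-t₁))) * -(c*1)) =
              -(2*lam*M/Bs * (Real.exp (c*(u-t₁)))⁻¹) := by
            rw [Real.exp_neg]
            field_simp
          rw [hterm]
          have hneg : ((n:ℝ)-1)*(x u^2 - 1) ≤ 0 := by nlinarith [hx2, hn1]
          linarith [hmain, hneg]
      have h2 := hψ (Set.mem_Icc.mpr ⟨le_rfl, hT₁le⟩) (Set.mem_Icc.mpr ⟨hT₁le, le_rfl⟩) hT₁le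
      simp only [sub_self, mul_zero, neg_zero, Real.exp_zero, mul_one] at h2
      have hepos : 0 ≤ (2*lam*M/(c*Bs)) * Real.exp (-(c*(T-t₁))) := by positivity
      linarith [hMT, hmt₁, hK0, hM4, h2, hepos]
    -- global exponential bound on ω
    have hωexp : ∀ t, t₁ ≤ t → ω t ≤ Real.sqrt (M/Bs) * Real.exp (-(c/2)*(t - t₁)) := by
      intro t ht
      have ht' := hmem ht
      have hBglob := stepA t ht (fun u hu _ => hboot u hu) t ht le_rfl
      have hωB : ω t^2 * (Bs * Real.exp (c*(t-t₁))) ≤ M := by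
        calc ω t^2 * (Bs * Real.exp (c*(t-t₁))) ≤ ω t^2 * B t :=
              mul_le_mul_of_nonneg_left hBglob (sq_nonneg _)
          _ = x t - y t := by rw [hgeq t ht']; ring
          _ ≤ M := le_trans (hm2 t ht) (hboot t ht)
      have hsq : ω t^2 ≤ (Real.sqrt (M/Bs) * Real.exp (-(c/2)*(t - t₁)))^2 := by
        have hMBs : (0:ℝ) ≤ M/Bs := by positivity
        have h1 : (Real.sqrt (M/Bs))^2 = M/Bs := Real.sq_sqrt hMBs
        have h2 : (Real.exp (-(c/2)*(t-t₁)))^2 = Real.exp (-(c*(t-t₁))) := by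
          rw [← Real.exp_nat_mul]
          congr 1
          push_cast
          ring
        rw [mul_pow, h1, h2, Real.exp_neg]
        calc ω t^2 ≤ M/(Bs*Real.exp (c*(t-t₁))) := (le_div_iff₀ (by positivity)).mpr hωB
          _ = M/Bs * (Real.exp (c*(t-t₁)))⁻¹ := by
              have hE := (Real.exp_pos (c*(t-t₁))).ne'
              field_simp
      calc ω t = Real.sqrt (ω t^2) := (Real.sqrt_sq (hωpos t ht').le).symm
        _ ≤ Real.sqrt ((Real.sqrt (M/Bs) * Real.exp (-(c/2)*(t - t₁)))^2) := Real.sqrt_le_sqrt hsq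
        _ = Real.sqrt (M/Bs) * Real.exp (-(c/2)*(t - t₁)) := Real.sqrt_sq (by positivity)
    -- ω is integrable : contradiction
    have hInt1 : IntegrableOn ω (Set.Ioc t₀ t₁) volume := by
      have hco : ContinuousOn ω (Set.Icc t₀ t₁) :=
        fun u hu => (hcω u (hsubIcc le_rfl hu)).continuousWithinAt
      exact hco.integrableOn_Icc.mono_set Set.Ioc_subset_Icc_self
    have hInt2 : IntegrableOn ω (Set.Ioi t₁) volume := by
      have hg : IntegrableOn (fun t => (Real.sqrt (M/Bs) * Real.exp ((c/2)*t₁)) *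
          Real.exp (-(c/2)*t)) (Set.Ioi t₁) volume :=
        (exp_neg_integrableOn_Ioi t₁ (by positivity)).const_mul _
      apply Integrable.mono hg
      · have hcont : ContinuousOn ω (Set.Ioi t₁) :=
          fun u hu => (hcω u (hsub (le_trans ht₁0 (le_of_lt hu)))).continuousWithinAt
        exact hcont.aestronglyMeasurable measurableSet_Ioi
      · rw [ae_restrict_iff' measurableSet_Ioi]
        refine Filter.Eventually.of_forall fun u hu => ?_
        have h1 := hωexp u (le_of_lt hu)
        have h2 : (0:ℝ) < Real.sqrt (M/Bs) * Real.exp ((c/2)*t₁) * Real.exp (-(c/2)*u) := by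
          positivity
        rw [Real.norm_eq_abs, Real.norm_eq_abs,
          abs_of_pos (hωpos u (hsub (le_trans ht₁0 (le_of_lt hu)))), abs_of_pos h2]
        calc ω u ≤ Real.sqrt (M/Bs) * Real.exp (-(c/2)*(u - t₁)) := h1
          _ = Real.sqrt (M/Bs) * Real.exp ((c/2)*t₁) * Real.exp (-(c/2)*u) := by
              rw [mul_assoc, ← Real.exp_add]
              congr 2
              ring
    exact hdiv (by rw [← Set.Ioc_union_Ioi_eq_Ioi ht₁0]; exact hInt1.union hInt2)
end

section
/- If a solution (ω,x,y) of the system satisfies x(t₀) = 0, y(t₀) ≤ 0, and x'(t₀) > 0 at some t₀, then x' and x'' remain positive for t > t₀ (while the solution exists), x(t) ≥ x'(t₀)(t-t₀), and the trajectory eventually enters the region {x > 1}. -/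
open Real Set Filter

namespace Stmt18Aux

/-- If `0 ≤ φ a` and either `0 < φ a` or the derivative at `a` is positive,
then `φ` is positive just to the right of `a`. -/
lemma eventually_pos_right {φ : ℝ → ℝ} {a d : ℝ} (hφ : HasDerivAt φ d a)
    (h0 : 0 ≤ φ a) (hd : φ a = 0 → 0 < d) :
    ∀ᶠ t in nhdsWithin a (Ioi a), 0 < φ t := by
  rcases h0.lt_or_eq with hpos | heq
  · exact eventually_nhdsWithin_of_eventually_nhds
      (hφ.continuousAt.tendsto.eventually (eventually_gt_nhds hpos))
  · have hd' : 0 < d := hd heq.symm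
    have hslope := (hasDerivAt_iff_tendsto_slope.1 hφ).eventually (eventually_gt_nhds hd')
    have hsub : nhdsWithin a (Ioi a) ≤ nhdsWithin a ({a}ᶜ) :=
      nhdsWithin_mono a (fun s hs => ne_of_gt hs)
    filter_upwards [hsub hslope, self_mem_nhdsWithin] with t ht htI
    have hta : 0 < t - a := sub_pos.2 htI
    rw [slope_def_field] at ht
    have := mul_pos ht hta
    rw [div_mul_cancel₀ _ (ne_of_gt hta)] at this
    rw [← heq] at this
    linarith

variable (n : ℕ) (lam : ℝ) (ω x y : ℝ → ℝ)

/-- Right-hand side for `x'`. -/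
def F (t : ℝ) : ℝ := x t ^ 2 - x t * y t + (n : ℝ) - 1 - lam * ω t ^ 2

/-- `x''`. -/
def G (t : ℝ) : ℝ :=
  (3 * x t - y t) * F n lam ω x y t + ((n : ℝ) - 1) * x t * (x t ^ 2 - 1)

/-- `x'''`. -/
def H (t : ℝ) : ℝ :=
  2 * x t * ((2 * (n : ℝ) - 1) * x t - y t) * F n lam ω x y t
    + 2 * F n lam ω x y t ^ 2 + (3 * x t - y t) * G n lam ω x y t

lemma hasDerivAt_F {t : ℝ}
    (hω : HasDerivAt ω (x t * ω t) t)
    (hx : HasDerivAt x (F n lam ω x y t) t)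
    (hy : HasDerivAt y (x t * y t - (n : ℝ) * x t ^ 2 - lam * ω t ^ 2) t) :
    HasDerivAt (F n lam ω x y) (G n lam ω x y t) t := by
  have h1 := hx.pow 2
  have h2 := hx.mul hy
  have h3 := (hω.pow 2).const_mul lam
  have h4 := (((h1.sub h2).add_const ((n : ℝ))).sub_const 1).sub h3
  refine h4.congr_deriv ?_
  simp only [F, G]
  push_cast
  ring

lemma hasDerivAt_G {t : ℝ}
    (hω : HasDerivAt ω (x t * ω t) t)
    (hx : HasDerivAt x (F n lam ω x y t) t)
    (hy : HasDerivAt y (x t * y t - (n : ℝ) * x t ^ 2 - lam * ω t ^ 2) t) :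
    HasDerivAt (G n lam ω x y) (H n lam ω x y t) t := by
  have hF := hasDerivAt_F n lam ω x y hω hx hy
  have h4 := ((hx.const_mul 3).sub hy).mul hF
  have h6 := (hx.pow 2).sub_const 1
  have h7 := (hx.const_mul ((n : ℝ) - 1)).mul h6
  have h8 := h4.add h7
  refine h8.congr_deriv ?_
  simp only [F, G, H, Pi.sub_apply, Pi.pow_apply]
  push_cast
  ring

lemma H_pos (hn : 2 ≤ n) {t : ℝ} (hy : y t < 0) (hx : 0 < x t)
    (hF : 0 < F n lam ω x y t) (hG : 0 < G n lam ω x y t) :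
    0 < H n lam ω x y t := by
  have hn' : (2 : ℝ) ≤ (n : ℝ) := by exact_mod_cast hn
  have e1 : 0 < (2 * (n : ℝ) - 1) * x t - y t := by nlinarith
  have e2 : 0 < 3 * x t - y t := by nlinarith
  have t1 : 0 < 2 * x t * ((2 * (n : ℝ) - 1) * x t - y t) * F n lam ω x y t := by positivity
  have t2 : 0 < 2 * F n lam ω x y t ^ 2 := by positivity
  have t3 : 0 < (3 * x t - y t) * G n lam ω x y t := mul_pos e2 hG
  unfold H
  linarith

lemma G_at_zero {t : ℝ} (hx0 : x t = 0) :
    G n lam ω x y t = -(y t) * F n lam ω x y t := by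
  simp only [G]
  rw [hx0]
  ring

lemma H_at_zero {t : ℝ} (hx0 : x t = 0) (hy0 : y t = 0) :
    H n lam ω x y t = 2 * F n lam ω x y t ^ 2 := by
  simp only [H, G]
  rw [hx0, hy0]
  ring

end Stmt18Aux

/-- If a maximal solution `(ω, x, y)` on `(S,T)` of the system
`ω' = xω`, `x' = x² - xy + n - 1 - λω²`, `y' = xy - nx² - λω²` (with `ω > 0`)
satisfies `x(t₀) = 0`, `y(t₀) ≤ 0`, and `x'(t₀) > 0` at some `t₀`, then `x'` and `x''`
remain positive for `t > t₀` while the solution exists, `x(t) ≥ x'(t₀)(t - t₀)`, and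
the trajectory eventually enters (and remains in) the region `{x > 1}`.
Maximality is encoded by: if `T < ∞` then `x` is unbounded forward in time.
Here `S, T : EReal` may be infinite. -/
theorem stmt18
    (n : ℕ) (hn : 2 ≤ n) (lam : ℝ) (hlam : 0 < lam)
    (S T : EReal) (ω x y : ℝ → ℝ)
    (hsys : ∀ t : ℝ, S < (t : EReal) → (t : EReal) < T →
      HasDerivAt ω (x t * ω t) t ∧
      HasDerivAt x ((x t) ^ 2 - x t * y t + (n : ℝ) - 1 - lam * (ω t) ^ 2) t ∧
      HasDerivAt y (x t * y t - (n : ℝ) * (x t) ^ 2 - lam * (ω t) ^ 2) t)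
    (hωpos : ∀ t : ℝ, S < (t : EReal) → (t : EReal) < T → 0 < ω t)
    (t₀ : ℝ) (ht₀S : S < (t₀ : EReal)) (ht₀T : (t₀ : EReal) < T)
    (hmax : T ≠ ⊤ → ∀ M : ℝ, ∃ t : ℝ, t₀ < t ∧ (t : EReal) < T ∧ M < |x t|)
    (hx0 : x t₀ = 0) (hy0 : y t₀ ≤ 0) (hx'0 : 0 < deriv x t₀) :
    (∀ t : ℝ, t₀ < t → (t : EReal) < T →
      0 < deriv x t ∧ 0 < deriv (deriv x) t ∧ deriv x t₀ * (t - t₀) ≤ x t) ∧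
    (∃ t₁ : ℝ, t₀ < t₁ ∧ (t₁ : EReal) < T ∧
      ∀ t : ℝ, t₁ ≤ t → (t : EReal) < T → 1 < x t) := by
  classical
  set F := Stmt18Aux.F n lam ω x y with hFdef
  set G := Stmt18Aux.G n lam ω x y with hGdef
  set H := Stmt18Aux.H n lam ω x y with hHdef
  set U : Set ℝ := {t : ℝ | S < (t : EReal) ∧ (t : EReal) < T} with hUdef
  have hUopen : IsOpen U := by
    have : U = (fun t : ℝ => (t : EReal)) ⁻¹' (Ioo S T) := rfl
    rw [this]
    exact isOpen_Ioo.preimage continuous_coe_real_ereal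
  have ht₀U : t₀ ∈ U := ⟨ht₀S, ht₀T⟩
  have hUsub : ∀ t : ℝ, t₀ ≤ t → (t : EReal) < T → t ∈ U := fun t h1 h2 =>
    ⟨lt_of_lt_of_le ht₀S (EReal.coe_le_coe_iff.2 h1), h2⟩
  have hω' : ∀ t ∈ U, HasDerivAt ω (x t * ω t) t := fun t ht => (hsys t ht.1 ht.2).1
  have hx' : ∀ t ∈ U, HasDerivAt x (F t) t := fun t ht => (hsys t ht.1 ht.2).2.1
  have hy' : ∀ t ∈ U,
      HasDerivAt y (x t * y t - (n : ℝ) * x t ^ 2 - lam * ω t ^ 2) t :=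
    fun t ht => (hsys t ht.1 ht.2).2.2
  have hF' : ∀ t ∈ U, HasDerivAt F (G t) t := fun t ht =>
    Stmt18Aux.hasDerivAt_F n lam ω x y (hω' t ht) (hx' t ht) (hy' t ht)
  have hG' : ∀ t ∈ U, HasDerivAt G (H t) t := fun t ht =>
    Stmt18Aux.hasDerivAt_G n lam ω x y (hω' t ht) (hx' t ht) (hy' t ht)
  have hderivx : ∀ t ∈ U, deriv x t = F t := fun t ht => (hx' t ht).deriv
  have hc : 0 < F t₀ := by rw [← hderivx t₀ ht₀U]; exact hx'0
  -- monotonicity helper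
  have mono : ∀ (φ ψ : ℝ → ℝ), (∀ s ∈ U, HasDerivAt φ (ψ s) s) →
      ∀ a b : ℝ, t₀ ≤ a → a < b → (b : EReal) < T →
      (∀ s, a < s → s < b → 0 < ψ s) → φ a < φ b := by
    intro φ ψ hφ a b ha hab hbT hψ
    have hsubU : Icc a b ⊆ U := fun s hs =>
      hUsub s (le_trans ha hs.1) (lt_of_le_of_lt (EReal.coe_le_coe_iff.2 hs.2) hbT)
    have hsm := strictMonoOn_of_deriv_pos (convex_Icc a b)
      (fun s hs => (hφ s (hsubU hs)).continuousAt.continuousWithinAt)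
      (fun s hs => by
        rw [interior_Icc] at hs
        rw [(hφ s (hsubU ⟨hs.1.le, hs.2.le⟩)).deriv]
        exact hψ s hs.1 hs.2)
    exact hsm (left_mem_Icc.2 hab.le) (right_mem_Icc.2 hab.le) hab
  -- behaviour just to the right of t₀
  have hωpos0 : 0 < ω t₀ := hωpos t₀ ht₀S ht₀T
  have hnear : ∀ᶠ t in nhdsWithin t₀ (Ioi t₀),
      t ∈ U ∧ y t < 0 ∧ 0 < x t ∧ 0 < F t ∧ 0 < G t := by
    have hUn : ∀ᶠ t in nhdsWithin t₀ (Ioi t₀), t ∈ U :=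
      eventually_nhdsWithin_of_eventually_nhds (hUopen.mem_nhds ht₀U)
    have hyn : ∀ᶠ t in nhdsWithin t₀ (Ioi t₀), 0 < -(y t) := by
      apply Stmt18Aux.eventually_pos_right ((hy' t₀ ht₀U).neg)
        (by simp only [Pi.neg_apply]; linarith)
      intro h0
      have hy00 : y t₀ = 0 := by simp only [Pi.neg_apply] at h0; linarith
      rw [hx0, hy00]
      have : 0 < lam * ω t₀ ^ 2 := by positivity
      ring_nf
      nlinarith
    have hxn : ∀ᶠ t in nhdsWithin t₀ (Ioi t₀), 0 < x t :=
      Stmt18Aux.eventually_pos_right (hx' t₀ ht₀U) hx0.ge (fun _ => hc)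
    have hFn : ∀ᶠ t in nhdsWithin t₀ (Ioi t₀), 0 < F t :=
      Stmt18Aux.eventually_pos_right (hF' t₀ ht₀U) hc.le (fun h => absurd h (ne_of_gt hc))
    have hGn : ∀ᶠ t in nhdsWithin t₀ (Ioi t₀), 0 < G t := by
      have hG0 : G t₀ = -(y t₀) * F t₀ := Stmt18Aux.G_at_zero n lam ω x y hx0
      apply Stmt18Aux.eventually_pos_right (hG' t₀ ht₀U)
        (by rw [hG0]; exact mul_nonneg (by linarith) hc.le)
      intro h0
      have hy00 : y t₀ = 0 := by
        rw [hG0] at h0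
        rcases mul_eq_zero.1 h0 with h | h
        · linarith
        · exact absurd h (ne_of_gt hc)
      rw [hHdef, Stmt18Aux.H_at_zero n lam ω x y hx0 hy00, ← hFdef]
      nlinarith [hc]
    filter_upwards [hUn, hyn, hxn, hFn, hGn] with t h1 h2 h3 h4 h5
    exact ⟨h1, by linarith, h3, h4, h5⟩
  obtain ⟨u, hu₀, hu⟩ := mem_nhdsGT_iff_exists_Ioo_subset.1 hnear
  -- the key invariance statement
  have key : ∀ t : ℝ, t₀ < t → (t : EReal) < T →
      y t < 0 ∧ 0 < x t ∧ 0 < F t ∧ 0 < G t := by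
    intro t htt htT
    by_contra hng
    set E : Set ℝ := {s : ℝ | t₀ < s ∧ (s : EReal) < T ∧
      ¬(y s < 0 ∧ 0 < x s ∧ 0 < F s ∧ 0 < G s)} with hEdef
    have hEne : E.Nonempty := ⟨t, htt, htT, hng⟩
    have hbdd : BddBelow E := ⟨t₀, fun e he => he.1.le⟩
    set τ := sInf E with hτdef
    have hEu : ∀ e ∈ E, u ≤ e := by
      intro e he
      by_contra hlt
      push_neg at hlt
      exact he.2.2 (hu ⟨he.1, hlt⟩).2
    have hτu : u ≤ τ := le_csInf hEne hEu
    have ht₀τ : t₀ < τ := lt_of_lt_of_le hu₀ hτu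
    have hτT : (τ : EReal) < T := by
      obtain ⟨e, he⟩ := hEne
      exact lt_of_le_of_lt (EReal.coe_le_coe_iff.2 (csInf_le hbdd he)) he.2.1
    have hτU : τ ∈ U := hUsub τ ht₀τ.le hτT
    have hGoodOn : ∀ s, t₀ < s → s < τ →
        y s < 0 ∧ 0 < x s ∧ 0 < F s ∧ 0 < G s := by
      intro s hs1 hs2
      by_contra hns
      have hsT : (s : EReal) < T := lt_trans (EReal.coe_lt_coe_iff.2 hs2) hτT
      exact absurd (csInf_le hbdd ⟨hs1, hsT, hns⟩) (not_le.2 hs2)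
    set m := (t₀ + τ) / 2 with hmdef
    have hm1 : t₀ < m := by rw [hmdef]; linarith
    have hm2 : m < τ := by rw [hmdef]; linarith
    have hGm := hGoodOn m hm1 hm2
    have hinner : ∀ s, m < s → s < τ →
        y s < 0 ∧ 0 < x s ∧ 0 < F s ∧ 0 < G s :=
      fun s h1 h2 => hGoodOn s (lt_trans hm1 h1) h2
    have hxτ : 0 < x τ :=
      lt_trans hGm.2.1 (mono x F hx' m τ hm1.le hm2 hτT
        (fun s h1 h2 => (hinner s h1 h2).2.2.1))
    have hFτ : 0 < F τ :=
      lt_trans hGm.2.2.1 (mono F G hF' m τ hm1.le hm2 hτT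
        (fun s h1 h2 => (hinner s h1 h2).2.2.2))
    have hyτ : y τ < 0 := by
      have := mono (fun s => -(y s))
        (fun s => -(x s * y s - (n : ℝ) * x s ^ 2 - lam * ω s ^ 2))
        (fun s hs => (hy' s hs).neg) m τ hm1.le hm2 hτT
        (fun s h1 h2 => by
          show 0 < -(x s * y s - (n : ℝ) * x s ^ 2 - lam * ω s ^ 2)
          obtain ⟨hys, hxs, _, _⟩ := hinner s h1 h2
          have hsU : s ∈ U := hUsub s (le_trans hm1.le h1.le)
            (lt_trans (EReal.coe_lt_coe_iff.2 h2) hτT)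
          have hωs : 0 < ω s := hωpos s hsU.1 hsU.2
          nlinarith [mul_pos hxs (neg_pos.2 hys), mul_pos hlam (pow_pos hωs 2),
            sq_nonneg (x s)])
      have hmono : -y m < -y τ := this
      have hym := hGm.1
      linarith
    have hGτ : 0 < G τ :=
      lt_trans hGm.2.2.2 (mono G H hG' m τ hm1.le hm2 hτT
        (fun s h1 h2 => by
          obtain ⟨hys, hxs, hFs, hGs⟩ := hinner s h1 h2
          exact Stmt18Aux.H_pos n lam ω x y hn hys hxs hFs hGs))
    -- Good is open around τ; contradiction with τ = inf E
    have hcont : ∀ᶠ s in nhds τ, y s < 0 ∧ 0 < x s ∧ 0 < F s ∧ 0 < G s := by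
      filter_upwards [(hy' τ hτU).continuousAt.tendsto.eventually (eventually_lt_nhds hyτ),
        (hx' τ hτU).continuousAt.tendsto.eventually (eventually_gt_nhds hxτ),
        (hF' τ hτU).continuousAt.tendsto.eventually (eventually_gt_nhds hFτ),
        (hG' τ hτU).continuousAt.tendsto.eventually (eventually_gt_nhds hGτ)]
        with s h1 h2 h3 h4
      exact ⟨h1, h2, h3, h4⟩
    obtain ⟨δ, hδ0, hδ⟩ := Metric.eventually_nhds_iff.1 hcont
    obtain ⟨e, heE, heδ⟩ : ∃ e ∈ E, e < τ + δ := by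
      by_contra hc2
      push_neg at hc2
      have := le_csInf hEne hc2
      linarith
    have hτe : τ ≤ e := csInf_le hbdd heE
    have : dist e τ < δ := by
      rw [Real.dist_eq, abs_of_nonneg (by linarith)]
      linarith
    exact heE.2.2 (hδ this)
  -- first part of the conclusion
  have part1 : ∀ t : ℝ, t₀ < t → (t : EReal) < T →
      0 < deriv x t ∧ 0 < deriv (deriv x) t ∧ deriv x t₀ * (t - t₀) ≤ x t := by
    intro t ht1 ht2
    have htU : t ∈ U := hUsub t ht1.le ht2
    obtain ⟨hyt, hxt, hFt, hGt⟩ := key t ht1 ht2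
    refine ⟨by rw [hderivx t htU]; exact hFt, ?_, ?_⟩
    · have hev : deriv x =ᶠ[nhds t] F := by
        filter_upwards [hUopen.mem_nhds htU] with s hs using hderivx s hs
      rw [hev.deriv_eq, (hF' t htU).deriv]
      exact hGt
    · rw [hderivx t₀ ht₀U]
      have hφ : ∀ s ∈ U, HasDerivAt (fun s => x s - F t₀ * (s - t₀)) (F s - F t₀) s := by
        intro s hs
        have h9 : HasDerivAt (fun s : ℝ => F t₀ * (s - t₀)) (F t₀) s := by
          simpa using ((hasDerivAt_id s).sub_const t₀).const_mul (F t₀)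
        exact (hx' s hs).sub h9
      have hψ : ∀ s, t₀ < s → s < t → 0 < F s - F t₀ := by
        intro s h1 h2
        have hsT : (s : EReal) < T := lt_trans (EReal.coe_lt_coe_iff.2 h2) ht2
        have := mono F G hF' t₀ s le_rfl h1 hsT
          (fun r hr1 hr2 => (key r hr1 (lt_trans (EReal.coe_lt_coe_iff.2 hr2) hsT)).2.2.2)
        linarith
      have := mono (fun s => x s - F t₀ * (s - t₀)) (fun s => F s - F t₀)
        hφ t₀ t le_rfl ht1 ht2 hψ
      simp only [hx0, sub_self, mul_zero, sub_zero] at this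
      linarith
  refine ⟨part1, ?_⟩
  -- second part: entering the region {x > 1}
  by_cases hT : T = ⊤
  · refine ⟨t₀ + 2 / F t₀, by nlinarith [div_pos two_pos hc], by rw [hT]; exact EReal.coe_lt_top _, ?_⟩
    intro t ht1 ht2
    have ht₀t : t₀ < t := by
      have : 0 < 2 / F t₀ := by positivity
      linarith
    have h3 := (part1 t ht₀t ht2).2.2
    rw [hderivx t₀ ht₀U] at h3
    have h4 : 2 ≤ F t₀ * (t - t₀) := by
      have h5 : 2 / F t₀ ≤ t - t₀ := by linarith
      have := mul_le_mul_of_nonneg_left h5 hc.le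
      rwa [mul_div_cancel₀ _ (ne_of_gt hc)] at this
    linarith
  · obtain ⟨t', h1, h2, h3⟩ := hmax hT 1
    have hxt' : 0 < x t' := (key t' h1 h2).2.1
    rw [abs_of_pos hxt'] at h3
    refine ⟨t', h1, h2, ?_⟩
    intro t ht1 ht2
    rcases eq_or_lt_of_le ht1 with rfl | hlt
    · exact h3
    · have : x t' < x t := mono x F hx' t' t h1.le hlt ht2
        (fun s hs1 hs2 => (key s (lt_trans h1 hs1)
          (lt_trans (EReal.coe_lt_coe_iff.2 hs2) ht2)).2.2.1)
      linarith
end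

section
/- Any solution of the system corresponding to a smooth shrinking soliton on S^{n+1} — i.e., a solution on (-∞,∞) with ω > 0 tending to (0,1,n) as t → -∞ and to (0,-1,-n) as t → ∞ — satisfies -1 < x(t) < 1 and x'(t) < 0 for all t; equivalently, both sectional curvatures ν₁ = -x'/ω² and ν₂ = (1-x²)/ω² are strictly positive along the trajectory. -/
open Real Set Filter

/-- A continuous function with limits at both ends, exceeding both limits somewhere,
attains a global maximum. -/
lemma exists_global_max_of_tendsto {f : ℝ → ℝ} (hf : Continuous f) {a b : ℝ}
    (ha : Tendsto f atBot (nhds a)) (hb : Tendsto f atTop (nhds b)) {t₀ : ℝ}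
    (h1 : a < f t₀) (h2 : b < f t₀) : ∃ t', ∀ t, f t ≤ f t' := by
  obtain ⟨A, hA⟩ := eventually_atBot.mp (ha.eventually_lt_const h1)
  obtain ⟨B, hB⟩ := eventually_atTop.mp (hb.eventually_lt_const h2)
  have hmem : t₀ ∈ Icc (min A t₀) (max B t₀) := ⟨min_le_right _ _, le_max_right _ _⟩
  obtain ⟨t', ht'm, ht'⟩ := isCompact_Icc.exists_isMaxOn ⟨t₀, hmem⟩ hf.continuousOn
  refine ⟨t', fun t => ?_⟩
  by_cases h : t ∈ Icc (min A t₀) (max B t₀)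
  · exact isMaxOn_iff.mp ht' t h
  · rw [mem_Icc, not_and_or] at h
    have hlt : f t < f t₀ := by
      rcases h with h | h
      · push_neg at h
        exact hA t (le_of_lt (lt_of_lt_of_le h (min_le_left _ _)))
      · push_neg at h
        exact hB t (le_of_lt (lt_of_le_of_lt (le_max_left _ _) h))
    exact hlt.le.trans (isMaxOn_iff.mp ht' t₀ hmem)

/-- At a global max of `f`, if `f' = d` everywhere and `d` has a derivative at the max point
which is forced positive when `d` vanishes there, we get a contradiction. -/
lemma no_global_max_of_deriv2_pos {f d : ℝ → ℝ} (hf : ∀ t, HasDerivAt f (d t) t)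
    {t' e : ℝ} (hd : HasDerivAt d e t') (hmax : ∀ t, f t ≤ f t')
    (he : d t' = 0 → 0 < e) : False := by
  have hcont : Continuous f := continuous_iff_continuousAt.mpr fun t => (hf t).continuousAt
  have hlm : IsLocalMax f t' := Filter.Eventually.of_forall hmax
  have hd0 : d t' = 0 := hlm.hasDerivAt_eq_zero (hf t')
  have hepos := he hd0
  have hslope : Tendsto (slope d t') (nhdsWithin t' {t'}ᶜ) (nhds e) :=
    hasDerivAt_iff_tendsto_slope.mp hd
  have h1 : ∀ᶠ s in nhdsWithin t' {t'}ᶜ, 0 < slope d t' s := hslope.eventually_const_lt hepos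
  have h2 : ∀ᶠ s in nhdsWithin t' (Ioi t'), 0 < d s := by
    have hle : nhdsWithin t' (Ioi t') ≤ nhdsWithin t' {t'}ᶜ :=
      nhdsWithin_mono _ fun s hs => ne_of_gt hs
    filter_upwards [h1.filter_mono hle, self_mem_nhdsWithin] with s hs hs'
    have hst : 0 < s - t' := sub_pos.mpr hs'
    rw [slope_def_field, hd0, sub_zero] at hs
    have := mul_pos hs hst
    rwa [div_mul_cancel₀ _ (ne_of_gt hst)] at this
  obtain ⟨c, hc, hIoo⟩ := ((nhdsGT_basis t').eventually_iff).mp h2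
  set m := (t' + c) / 2 with hm
  have hm1 : t' < m := by rw [hm]; linarith
  have hm2 : m < c := by rw [hm]; linarith
  have hmono : StrictMonoOn f (Icc t' m) := by
    apply strictMonoOn_of_deriv_pos (convex_Icc _ _) hcont.continuousOn
    intro s hs
    rw [interior_Icc] at hs
    rw [(hf s).deriv]
    exact hIoo ⟨hs.1, lt_trans hs.2 hm2⟩
  have hlt : f t' < f m := hmono ⟨le_refl _, hm1.le⟩ ⟨hm1.le, le_refl _⟩ hm1
  exact absurd (hmax m) (not_le.mpr hlt)

/-- Gronwall-type vanishing, forward in time. -/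
lemma vanish_of_le {h dh : ℝ → ℝ} (hd : ∀ t, HasDerivAt h (dh t) t)
    (hnn : ∀ t, 0 ≤ h t) {t₀ : ℝ} (h0 : h t₀ = 0)
    (hK : ∀ T, ∃ K : ℝ, ∀ t ∈ Icc t₀ T, dh t ≤ K * h t) :
    ∀ t, t₀ ≤ t → h t = 0 := by
  intro T hT
  obtain ⟨K, hK⟩ := hK T
  have hψ : ∀ t, HasDerivAt (fun t => h t * Real.exp (-K * t))
      ((dh t - K * h t) * Real.exp (-K * t)) t := by
    intro t
    have h1 : HasDerivAt (fun t : ℝ => Real.exp (-K * t)) (Real.exp (-K * t) * (-K)) t := by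
      simpa using ((hasDerivAt_id t).const_mul (-K)).exp
    have := (hd t).fun_mul h1
    refine this.congr_deriv ?_
    ring
  have hanti : AntitoneOn (fun t => h t * Real.exp (-K * t)) (Icc t₀ T) := by
    apply antitoneOn_of_deriv_nonpos (convex_Icc _ _)
    · exact (Continuous.mul
        (continuous_iff_continuousAt.mpr fun t => (hd t).continuousAt)
        (by continuity)).continuousOn
    · exact fun s _ => (hψ s).differentiableAt.differentiableWithinAt
    · intro s hs
      rw [interior_Icc] at hs
      rw [(hψ s).deriv]
      have h2 := hK s ⟨hs.1.le, hs.2.le⟩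
      have h3 := (Real.exp_pos (-K * s)).le
      nlinarith
  have h1 : h T * Real.exp (-K * T) ≤ h t₀ * Real.exp (-K * t₀) :=
    hanti ⟨le_refl _, hT⟩ ⟨hT, le_refl _⟩ hT
  rw [h0, zero_mul] at h1
  have h2 := hnn T
  have h3 := Real.exp_pos (-K * T)
  nlinarith

/-- Gronwall-type vanishing, backward in time. -/
lemma vanish_of_ge {h dh : ℝ → ℝ} (hd : ∀ t, HasDerivAt h (dh t) t)
    (hnn : ∀ t, 0 ≤ h t) {t₀ : ℝ} (h0 : h t₀ = 0)
    (hK : ∀ T, ∃ K : ℝ, ∀ t ∈ Icc T t₀, -(K * h t) ≤ dh t) :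
    ∀ t, t ≤ t₀ → h t = 0 := by
  intro T hT
  obtain ⟨K, hK⟩ := hK T
  have hψ : ∀ t, HasDerivAt (fun t => h t * Real.exp (K * t))
      ((dh t + K * h t) * Real.exp (K * t)) t := by
    intro t
    have h1 : HasDerivAt (fun t : ℝ => Real.exp (K * t)) (Real.exp (K * t) * K) t := by
      simpa using ((hasDerivAt_id t).const_mul K).exp
    have := (hd t).fun_mul h1
    refine this.congr_deriv ?_
    ring
  have hmono : MonotoneOn (fun t => h t * Real.exp (K * t)) (Icc T t₀) := by
    apply monotoneOn_of_deriv_nonneg (convex_Icc _ _)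
    · exact (Continuous.mul
        (continuous_iff_continuousAt.mpr fun t => (hd t).continuousAt)
        (by continuity)).continuousOn
    · exact fun s _ => (hψ s).differentiableAt.differentiableWithinAt
    · intro s hs
      rw [interior_Icc] at hs
      rw [(hψ s).deriv]
      have h2 := hK s ⟨hs.1.le, hs.2.le⟩
      have h3 := (Real.exp_pos (K * s)).le
      nlinarith
  have h1 : h T * Real.exp (K * T) ≤ h t₀ * Real.exp (K * t₀) :=
    hmono ⟨le_refl _, hT⟩ ⟨hT, le_refl _⟩ hT
  rw [h0, zero_mul] at h1
  have h2 := hnn T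
  have h3 := Real.exp_pos (K * T)
  nlinarith

set_option maxHeartbeats 1600000 in
/-- Uniqueness: if `x` hits a root `c ∈ {0,1,-1}` of `x(x²-1)` with zero derivative,
then `x ≡ c`. -/
lemma xconst {n : ℕ} (hn : 2 ≤ n) {x y z : ℝ → ℝ}
    (hx : ∀ t, HasDerivAt x (z t) t)
    (hz : ∀ t, HasDerivAt z ((3 * x t - y t) * z t + ((n : ℝ) - 1) * x t * ((x t) ^ 2 - 1)) t)
    (hyc : Continuous y) {c : ℝ} (hc : c = 0 ∨ c = 1 ∨ c = -1) {t₀ : ℝ}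
    (hx0 : x t₀ = c) (hz0 : z t₀ = 0) : ∀ t, x t = c := by
  have hxc : Continuous x := continuous_iff_continuousAt.mpr fun t => (hx t).continuousAt
  have hzc : Continuous z := continuous_iff_continuousAt.mpr fun t => (hz t).continuousAt
  have hc3 : c ^ 3 = c := by rcases hc with h | h | h <;> rw [h] <;> norm_num
  have hcle : c ≤ 1 := by rcases hc with h | h | h <;> rw [h] <;> norm_num
  have hcge : -1 ≤ c := by rcases hc with h | h | h <;> rw [h] <;> norm_num
  have hn1 : (1 : ℝ) ≤ (n : ℝ) - 1 := by
    have : (2 : ℝ) ≤ (n : ℝ) := by exact_mod_cast hn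
    linarith
  obtain ⟨h, hh_eq⟩ : ∃ h : ℝ → ℝ, h = fun t => (x t - c) ^ 2 + z t ^ 2 := ⟨_, rfl⟩
  obtain ⟨dh, hdh_eq⟩ : ∃ dh : ℝ → ℝ, dh = fun t =>
      2 * (x t - c) * z t +
        2 * z t * ((3 * x t - y t) * z t + ((n : ℝ) - 1) * x t * ((x t) ^ 2 - 1)) := ⟨_, rfl⟩
  have hd : ∀ t, HasDerivAt h (dh t) t := by
    intro t
    have h1 : HasDerivAt (fun s => (x s - c) ^ 2) (2 * (x t - c) * z t) t := by
      have := ((hx t).sub_const c).fun_pow 2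
      refine this.congr_deriv ?_
      push_cast
      ring
    have h2 : HasDerivAt (fun s => z s ^ 2)
        (2 * z t * ((3 * x t - y t) * z t + ((n : ℝ) - 1) * x t * ((x t) ^ 2 - 1))) t := by
      have := (hz t).fun_pow 2
      refine this.congr_deriv ?_
      push_cast
      ring
    rw [hh_eq, hdh_eq]
    exact h1.add h2
  have hbound : ∀ a b : ℝ, ∃ K : ℝ, ∀ t ∈ Icc a b, dh t ≤ K * h t ∧ -(K * h t) ≤ dh t := by
    intro a b
    obtain ⟨Cx, hCx⟩ := isCompact_Icc.exists_bound_of_continuousOn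
      (hxc.continuousOn : ContinuousOn x (Icc a b))
    obtain ⟨Cy, hCy⟩ := isCompact_Icc.exists_bound_of_continuousOn
      (hyc.continuousOn : ContinuousOn y (Icc a b))
    obtain ⟨M, hM_eq⟩ : ∃ M : ℝ, M = |Cx| + |Cy| + 1 := ⟨_, rfl⟩
    have hM1 : 1 ≤ M := by
      have := abs_nonneg Cx; have := abs_nonneg Cy; rw [hM_eq]; linarith
    obtain ⟨A₀, hA0_eq⟩ : ∃ A₀ : ℝ, A₀ = 1 + ((n : ℝ) - 1) * (M ^ 2 + M + 2) := ⟨_, rfl⟩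
    have hA0pos : 0 < A₀ := by rw [hA0_eq]; nlinarith
    refine ⟨A₀ ^ 2 + 16 * M ^ 2 + 1, ?_⟩
    intro t ht
    have hxb : |x t| ≤ M := by
      have h1 := hCx t ht; rw [Real.norm_eq_abs] at h1
      have := le_abs_self Cx; have := abs_nonneg Cy
      rw [hM_eq]; linarith
    have hyb : |y t| ≤ M := by
      have h1 := hCy t ht; rw [Real.norm_eq_abs] at h1
      have := le_abs_self Cy; have := abs_nonneg Cx
      rw [hM_eq]; linarith
    obtain ⟨hx1, hx2⟩ := abs_le.mp hxb
    obtain ⟨hy1, hy2⟩ := abs_le.mp hyb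
    obtain ⟨A, hA_eq⟩ : ∃ A : ℝ, A = 1 + ((n : ℝ) - 1) * ((x t) ^ 2 + c * x t + c ^ 2 - 1) := ⟨_, rfl⟩
    have hcx1 : c * x t ≤ M := by nlinarith
    have hcx2 : -M ≤ c * x t := by nlinarith
    have hQ1 : (x t) ^ 2 + c * x t + c ^ 2 - 1 ≤ M ^ 2 + M + 2 := by nlinarith
    have hQ2 : -(M ^ 2 + M + 2) ≤ (x t) ^ 2 + c * x t + c ^ 2 - 1 := by nlinarith
    have hA1 : A ≤ A₀ := by
      rw [hA_eq, hA0_eq]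
      have := mul_le_mul_of_nonneg_left hQ1 (by linarith : (0:ℝ) ≤ (n : ℝ) - 1)
      linarith
    have hA2 : -A₀ ≤ A := by
      rw [hA_eq, hA0_eq]
      have := mul_le_mul_of_nonneg_left hQ2 (by linarith : (0:ℝ) ≤ (n : ℝ) - 1)
      linarith
    have hB1 : 3 * x t - y t ≤ 4 * M := by linarith
    have hB2 : -(4 * M) ≤ 3 * x t - y t := by linarith
    have hdh_id : dh t = 2 * z t * (x t - c) * A + 2 * z t ^ 2 * (3 * x t - y t) := by
      rw [hdh_eq, hA_eq]
      linear_combination (2 * ((n : ℝ) - 1) * z t) * hc3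
    have hh_id : h t = (x t - c) ^ 2 + z t ^ 2 := by rw [hh_eq]
    have hAsq : A ^ 2 ≤ A₀ ^ 2 := sq_le_sq' hA2 hA1
    have hBsq : (3 * x t - y t) ^ 2 ≤ (4 * M) ^ 2 := sq_le_sq' hB2 hB1
    have hBsq' : (3 * x t - y t) ^ 2 ≤ 16 * M ^ 2 := by nlinarith [hBsq]
    constructor
    · rw [hdh_id, hh_id]
      nlinarith [sq_nonneg (z t * A - (x t - c)), sq_nonneg (z t * (3 * x t - y t) - z t),
        mul_nonneg (sub_nonneg.mpr hAsq) (sq_nonneg (z t)),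
        mul_nonneg (sub_nonneg.mpr hBsq') (sq_nonneg (z t)),
        sq_nonneg (x t - c)]
    · rw [hdh_id, hh_id]
      nlinarith [sq_nonneg (z t * A + (x t - c)), sq_nonneg (z t * (3 * x t - y t) + z t),
        mul_nonneg (sub_nonneg.mpr hAsq) (sq_nonneg (z t)),
        mul_nonneg (sub_nonneg.mpr hBsq') (sq_nonneg (z t)),
        sq_nonneg (x t - c)]
  have hnn : ∀ t, 0 ≤ h t := fun t => by rw [hh_eq]; positivity
  have h0 : h t₀ = 0 := by rw [hh_eq]; simp [hx0, hz0]
  have hfor : ∀ t, t₀ ≤ t → h t = 0 :=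
    vanish_of_le hd hnn h0 fun T => ⟨(hbound t₀ T).choose,
      fun t ht => ((hbound t₀ T).choose_spec t ht).1⟩
  have hback : ∀ t, t ≤ t₀ → h t = 0 :=
    vanish_of_ge hd hnn h0 fun T => ⟨(hbound T t₀).choose,
      fun t ht => ((hbound T t₀).choose_spec t ht).2⟩
  intro t
  have ht : h t = 0 := by
    rcases le_total t₀ t with h' | h'
    exacts [hfor t h', hback t h']
  have h1 : (x t - c) ^ 2 = 0 := by
    have h2 : (x t - c) ^ 2 + z t ^ 2 = 0 := by rw [hh_eq] at ht; exact ht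
    nlinarith [sq_nonneg (x t - c), sq_nonneg (z t)]
  have := pow_eq_zero_iff (n := 2) (by norm_num) |>.mp h1
  linarith [sub_eq_zero.mp this]

set_option maxHeartbeats 1600000 in
/-- Any solution of the system `ω' = xω`, `x' = x² - xy + n - 1 - λω²`,
`y' = xy - nx² - λω²` corresponding to a smooth shrinking soliton on `S^{n+1}` — i.e. a
solution on `(-∞, ∞)` with `ω > 0` tending to `P₀ = (0, 1, n)` as `t → -∞` and to
`P₁ = (0, -1, -n)` as `t → ∞` — satisfies `-1 < x(t) < 1` and `x'(t) < 0` for all `t`;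
equivalently, both sectional curvatures `ν₁ = -x'/ω²` and `ν₂ = (1 - x²)/ω²` are
strictly positive along the trajectory. -/
theorem stmt19
    (n : ℕ) (hn : 2 ≤ n) (lam : ℝ) (hlam : 0 < lam)
    (ω x y : ℝ → ℝ)
    (hsys : ∀ t : ℝ,
      HasDerivAt ω (x t * ω t) t ∧
      HasDerivAt x ((x t) ^ 2 - x t * y t + (n : ℝ) - 1 - lam * (ω t) ^ 2) t ∧
      HasDerivAt y (x t * y t - (n : ℝ) * (x t) ^ 2 - lam * (ω t) ^ 2) t)
    (hωpos : ∀ t : ℝ, 0 < ω t)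
    (hP₀ : Tendsto (fun t => (ω t, x t, y t)) atBot (nhds ((0 : ℝ), (1 : ℝ), (n : ℝ))))
    (hP₁ : Tendsto (fun t => (ω t, x t, y t)) atTop (nhds ((0 : ℝ), (-1 : ℝ), (-(n : ℝ))))) :
    ∀ t : ℝ,
      (-1 < x t ∧ x t < 1 ∧ deriv x t < 0) ∧
      0 < -(deriv x t) / (ω t) ^ 2 ∧ 0 < (1 - (x t) ^ 2) / (ω t) ^ 2 := by
  -- the function z = x'
  obtain ⟨z, hz_eq⟩ : ∃ z : ℝ → ℝ,
      z = fun t => (x t) ^ 2 - x t * y t + (n : ℝ) - 1 - lam * (ω t) ^ 2 := ⟨_, rfl⟩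
  have hzdef : ∀ t, z t = (x t) ^ 2 - x t * y t + (n : ℝ) - 1 - lam * (ω t) ^ 2 :=
    fun t => by rw [hz_eq]
  have hx' : ∀ t, HasDerivAt x (z t) t := fun t => by
    rw [hzdef t]; exact (hsys t).2.1
  have hn2 : (2 : ℝ) ≤ (n : ℝ) := by exact_mod_cast hn
  -- ζ = z'
  obtain ⟨ζ, hζ_eq⟩ : ∃ ζ : ℝ → ℝ,
      ζ = fun t => (3 * x t - y t) * z t + ((n : ℝ) - 1) * x t * ((x t) ^ 2 - 1) := ⟨_, rfl⟩
  have hζdef : ∀ t, ζ t = (3 * x t - y t) * z t + ((n : ℝ) - 1) * x t * ((x t) ^ 2 - 1) :=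
    fun t => by rw [hζ_eq]
  have hζ : ∀ t, HasDerivAt z (ζ t) t := by
    intro t
    have hω := (hsys t).1
    have hyD := (hsys t).2.2
    have hxD := hx' t
    have e1 : HasDerivAt (fun s => (x s) ^ 2) (2 * x t * z t) t := by
      have := hxD.fun_pow 2
      refine this.congr_deriv ?_
      push_cast
      ring
    have e2 : HasDerivAt (fun s => x s * y s)
        (z t * y t + x t * (x t * y t - (n : ℝ) * (x t) ^ 2 - lam * (ω t) ^ 2)) t :=
      hxD.mul hyD
    have e3 : HasDerivAt (fun s => lam * (ω s) ^ 2) (lam * (2 * ω t * (x t * ω t))) t := by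
      have := (hω.fun_pow 2).const_mul lam
      refine this.congr_deriv ?_
      push_cast
      ring
    have d1 := (((e1.sub e2).add_const ((n : ℝ))).sub_const 1).sub e3
    have d2 : HasDerivAt z
        ((2 * x t * z t - (z t * y t + x t * (x t * y t - (n : ℝ) * (x t) ^ 2 - lam * (ω t) ^ 2)))
          - lam * (2 * ω t * (x t * ω t))) t := by
      nth_rewrite 1 [hz_eq]; exact d1
    have := hzdef t
    convert d2 using 1
    rw [hζdef t]
    linear_combination (x t) * this
  -- continuity
  have hxc : Continuous x := continuous_iff_continuousAt.mpr fun t => (hx' t).continuousAt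
  have hyc : Continuous y := continuous_iff_continuousAt.mpr fun t => ((hsys t).2.2).continuousAt
  have hωc : Continuous ω := continuous_iff_continuousAt.mpr fun t => ((hsys t).1).continuousAt
  have hzc : Continuous z := continuous_iff_continuousAt.mpr fun t => (hζ t).continuousAt
  -- limits of coordinates
  have hxbot : Tendsto x atBot (nhds 1) := by
    have := ((continuous_fst.comp continuous_snd).tendsto ((0 : ℝ), (1 : ℝ), (n : ℝ))).comp hP₀
    simpa [Function.comp_def] using this
  have hxtop : Tendsto x atTop (nhds (-1)) := by
    have := ((continuous_fst.comp continuous_snd).tendsto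
      ((0 : ℝ), (-1 : ℝ), (-(n : ℝ)))).comp hP₁
    simpa [Function.comp_def] using this
  have hybot : Tendsto y atBot (nhds (n : ℝ)) := by
    have := ((continuous_snd.comp continuous_snd).tendsto ((0 : ℝ), (1 : ℝ), (n : ℝ))).comp hP₀
    simpa [Function.comp_def] using this
  have hytop : Tendsto y atTop (nhds (-(n : ℝ))) := by
    have := ((continuous_snd.comp continuous_snd).tendsto
      ((0 : ℝ), (-1 : ℝ), (-(n : ℝ)))).comp hP₁
    simpa [Function.comp_def] using this
  have hωbot : Tendsto ω atBot (nhds 0) := by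
    have := (continuous_fst.tendsto ((0 : ℝ), (1 : ℝ), (n : ℝ))).comp hP₀
    simpa [Function.comp_def] using this
  have hωtop : Tendsto ω atTop (nhds 0) := by
    have := (continuous_fst.tendsto ((0 : ℝ), (-1 : ℝ), (-(n : ℝ)))).comp hP₁
    simpa [Function.comp_def] using this
  -- limits of z
  have hzbot : Tendsto z atBot (nhds 0) := by
    have h1 : Tendsto (fun t => (x t) ^ 2 - x t * y t + (n : ℝ) - 1 - lam * (ω t) ^ 2) atBot
        (nhds ((1 : ℝ) ^ 2 - 1 * (n : ℝ) + (n : ℝ) - 1 - lam * 0 ^ 2)) := by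
      exact ((((hxbot.pow 2).sub (hxbot.mul hybot)).add_const ((n : ℝ))).sub_const 1).sub
        ((hωbot.pow 2).const_mul lam)
    have h2 : (1 : ℝ) ^ 2 - 1 * (n : ℝ) + (n : ℝ) - 1 - lam * 0 ^ 2 = 0 := by ring
    rw [h2] at h1
    rw [hz_eq]
    exact h1
  have hztop : Tendsto z atTop (nhds 0) := by
    have h1 : Tendsto (fun t => (x t) ^ 2 - x t * y t + (n : ℝ) - 1 - lam * (ω t) ^ 2) atTop
        (nhds ((-1 : ℝ) ^ 2 - (-1) * (-(n : ℝ)) + (n : ℝ) - 1 - lam * 0 ^ 2)) := by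
      exact ((((hxtop.pow 2).sub (hxtop.mul hytop)).add_const ((n : ℝ))).sub_const 1).sub
        ((hωtop.pow 2).const_mul lam)
    have h2 : (-1 : ℝ) ^ 2 - (-1) * (-(n : ℝ)) + (n : ℝ) - 1 - lam * 0 ^ 2 = 0 := by ring
    rw [h2] at h1
    rw [hz_eq]
    exact h1
  -- Step 1: x ≤ 1
  have hxle1 : ∀ t, x t ≤ 1 := by
    by_contra hcon
    push_neg at hcon
    obtain ⟨t₀, ht₀⟩ := hcon
    obtain ⟨t', ht'⟩ := exists_global_max_of_tendsto hxc hxbot hxtop ht₀ (by linarith)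
    refine no_global_max_of_deriv2_pos hx' (hζ t') ht' ?_
    intro hz0
    have hx1 : 1 < x t' := lt_of_lt_of_le ht₀ (ht' t₀)
    rw [hζdef t', hz0]
    have h1 : 0 < (n : ℝ) - 1 := by linarith
    have h2 : 0 < (x t') ^ 2 - 1 := by nlinarith
    nlinarith [mul_pos (mul_pos h1 (by linarith : (0:ℝ) < x t')) h2]
  -- Step 1': x < 1
  have hxlt1 : ∀ t, x t < 1 := by
    intro t
    rcases lt_or_eq_of_le (hxle1 t) with h | h
    · exact h
    exfalso
    have hmax : ∀ s, x s ≤ x t := fun s => by rw [h]; exact hxle1 s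
    have hlm : IsLocalMax x t := Filter.Eventually.of_forall hmax
    have hz0 : z t = 0 := hlm.hasDerivAt_eq_zero (hx' t)
    have hall := xconst hn hx' (fun s => (hζdef s) ▸ hζ s) hyc
      (Or.inr (Or.inl rfl)) h hz0
    have h2 : Tendsto (fun _ : ℝ => (1 : ℝ)) atTop (nhds (-1)) := hxtop.congr hall
    have := tendsto_nhds_unique h2 tendsto_const_nhds
    norm_num at this
  -- Step 2: -1 ≤ x
  have hxgem1 : ∀ t, -1 ≤ x t := by
    by_contra hcon
    push_neg at hcon
    obtain ⟨t₀, ht₀⟩ := hcon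
    obtain ⟨t', ht'⟩ := exists_global_max_of_tendsto hxc.neg hxbot.neg hxtop.neg
      (by simpa using by linarith : -(1:ℝ) < -x t₀) (by simpa using by linarith : -(-1:ℝ) < -x t₀)
    refine no_global_max_of_deriv2_pos (fun s => (hx' s).neg) (hζ t').neg ht' ?_
    intro hz0
    rw [neg_eq_zero] at hz0
    have hx1 : x t' < -1 := by
      have := ht' t₀
      simp only [Pi.neg_apply, neg_le_neg_iff] at this
      linarith [this]
    rw [hζdef t', hz0]
    have h1 : 0 < (n : ℝ) - 1 := by linarith
    have h2 : 0 < (x t') ^ 2 - 1 := by nlinarith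
    nlinarith [mul_pos (mul_pos h1 (by linarith : (0:ℝ) < -x t')) h2]
  -- Step 2': -1 < x
  have hxgtm1 : ∀ t, -1 < x t := by
    intro t
    rcases lt_or_eq_of_le (hxgem1 t) with h | h
    · exact h
    exfalso
    have hmin : ∀ s, x t ≤ x s := fun s => by rw [← h]; exact hxgem1 s
    have hlm : IsLocalMin x t := Filter.Eventually.of_forall hmin
    have hz0 : z t = 0 := hlm.hasDerivAt_eq_zero (hx' t)
    have hall := xconst hn hx' (fun s => (hζdef s) ▸ hζ s) hyc
      (Or.inr (Or.inr rfl)) h.symm hz0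
    have h2 : Tendsto (fun _ : ℝ => (-1 : ℝ)) atBot (nhds 1) := hxbot.congr hall
    have := tendsto_nhds_unique h2 tendsto_const_nhds
    norm_num at this
  -- Step 3: z ≤ 0
  have hzle : ∀ t, z t ≤ 0 := by
    by_contra hcon
    push_neg at hcon
    obtain ⟨t₀, ht₀⟩ := hcon
    obtain ⟨t', ht'⟩ := exists_global_max_of_tendsto hzc hzbot hztop ht₀ ht₀
    -- derivative of ζ at t'
    have hyD := (hsys t').2.2
    have d1 : HasDerivAt (fun s => 3 * x s - y s)
        (3 * z t' - (x t' * y t' - (n : ℝ) * (x t') ^ 2 - lam * (ω t') ^ 2)) t' := by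
      have := ((hx' t').const_mul 3).fun_sub hyD
      convert this using 1
    have d2 := d1.mul (hζ t')
    have d3 : HasDerivAt (fun s => ((n : ℝ) - 1) * x s * ((x s) ^ 2 - 1))
        ((((n : ℝ) - 1) * z t') * ((x t') ^ 2 - 1)
          + (((n : ℝ) - 1) * x t') * (2 * x t' * z t')) t' := by
      have e4 : HasDerivAt (fun s => ((n : ℝ) - 1) * x s) (((n : ℝ) - 1) * z t') t' :=
        (hx' t').const_mul _
      have e5 : HasDerivAt (fun s => (x s) ^ 2 - 1) (2 * x t' * z t') t' := by
        have := ((hx' t').fun_pow 2).sub_const 1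
        refine this.congr_deriv ?_
        push_cast
        ring
      exact e4.mul e5
    have dE : HasDerivAt ζ
        ((3 * z t' - (x t' * y t' - (n : ℝ) * (x t') ^ 2 - lam * (ω t') ^ 2)) * z t'
          + (3 * x t' - y t') * ζ t'
          + ((((n : ℝ) - 1) * z t') * ((x t') ^ 2 - 1)
            + (((n : ℝ) - 1) * x t') * (2 * x t' * z t'))) t' := by
      nth_rewrite 1 [hζ_eq]
      exact d2.add d3
    refine no_global_max_of_deriv2_pos hζ dE ht' ?_
    intro h0
    have hzpos : 0 < z t' := lt_of_lt_of_le ht₀ (ht' t₀)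
    have hx2 : (x t') ^ 2 ≤ 1 := by nlinarith [hxlt1 t', hxgtm1 t']
    have hζ0 : (3 * x t' - y t') * z t' + ((n : ℝ) - 1) * x t' * ((x t') ^ 2 - 1) = 0 := by
      rw [← hζdef t']; exact h0
    rw [h0, mul_zero, add_zero]
    have hident :
        (3 * z t' - (x t' * y t' - (n : ℝ) * (x t') ^ 2 - lam * (ω t') ^ 2)) * z t'
          + ((((n : ℝ) - 1) * z t') * ((x t') ^ 2 - 1)
            + (((n : ℝ) - 1) * x t') * (2 * x t' * z t'))
        = 2 * (z t') ^ 2 + 4 * ((n : ℝ) - 2) * (x t') ^ 2 * z t'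
          + 2 * ((n : ℝ) - 1) * (x t') ^ 2 * (1 - (x t') ^ 2) := by
      linear_combination (z t') * (hzdef t') + (2 * x t') * hζ0
    rw [hident]
    nlinarith [mul_pos hzpos hzpos,
      mul_nonneg (mul_nonneg (by linarith : (0:ℝ) ≤ 4 * ((n : ℝ) - 2)) (sq_nonneg (x t'))) hzpos.le,
      mul_nonneg (mul_nonneg (by linarith : (0:ℝ) ≤ 2 * ((n : ℝ) - 1)) (sq_nonneg (x t')))
        (by linarith : (0:ℝ) ≤ 1 - (x t') ^ 2)]
  -- Step 3': z < 0
  have hzlt : ∀ t, z t < 0 := by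
    intro t
    rcases lt_or_eq_of_le (hzle t) with h | h
    · exact h
    exfalso
    have hmax : ∀ s, z s ≤ z t := fun s => by rw [h]; exact hzle s
    have hlm : IsLocalMax z t := Filter.Eventually.of_forall hmax
    have hζ0 : ζ t = 0 := hlm.hasDerivAt_eq_zero (hζ t)
    have h1 : (3 * x t - y t) * z t + ((n : ℝ) - 1) * x t * ((x t) ^ 2 - 1) = 0 := by
      rw [← hζdef t]; exact hζ0
    rw [h, mul_zero, zero_add] at h1
    have hx0 : x t = 0 := by
      rcases mul_eq_zero.mp h1 with h2 | h2
      · rcases mul_eq_zero.mp h2 with h3 | h3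
        · exfalso; nlinarith
        · exact h3
      · exfalso; nlinarith [hxlt1 t, hxgtm1 t]
    have hall := xconst hn hx' (fun s => (hζdef s) ▸ hζ s) hyc (Or.inl rfl) hx0 h
    have h2 : Tendsto (fun _ : ℝ => (0 : ℝ)) atTop (nhds (-1)) := hxtop.congr hall
    have := tendsto_nhds_unique h2 tendsto_const_nhds
    norm_num at this
  -- conclusion
  intro t
  have hderiv : deriv x t = z t := (hx' t).deriv
  have hω2 : 0 < (ω t) ^ 2 := pow_pos (hωpos t) 2
  refine ⟨⟨hxgtm1 t, hxlt1 t, by rw [hderiv]; exact hzlt t⟩, ?_, ?_⟩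
  · rw [hderiv]
    exact div_pos (by linarith [hzlt t]) hω2
  · exact div_pos (by nlinarith [hxlt1 t, hxgtm1 t]) hω2
end
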